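/- arXiv:1103.0077 — 5 statements merged into one kernel-verified Lean document; each statement's English description precedes it below -/
import Mathlib

section
/- Let k ≥ 1 and let Υ ⊆ F_{2,k}. Then the following identity of formal power series in t with coefficients in ℚ[x] holds: (Σ_{n≥1} (t^{2n−1}/(k(2n−1))!) Σ_{F ∈ F^{(2),Υ}_{2n−1,k}} x^{Υ-mch^{(2)}(F)}) · (1 − Σ_{n≥1} (x−1)^{n−1} t^{2n} full_{2n}^Υ/(2kn)!) = Σ_{n≥1} (x−1)^{n−1} t^{2n−1} full_{2n−1}^Υ/(k(2n−1))!. -/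
/-- `F` is a filling of the `k × n` rectangle (row `i`, `1 ≤ i ≤ k`, counted from the
bottom; column `j`, `1 ≤ j ≤ n`) with the integers `1, …, kn`, each used exactly once,
whose entries strictly increase up each column.  Cells outside the rectangle carry `0`. -/
def IsFilling (n k : ℕ) (F : ℕ → ℕ → ℕ) : Prop :=
  (∀ i j, F i j ≠ 0 → 1 ≤ i ∧ i ≤ k ∧ 1 ≤ j ∧ j ≤ n) ∧
  Set.BijOn (fun p : ℕ × ℕ => F p.1 p.2) (Set.Icc 1 k ×ˢ Set.Icc 1 n) (Set.Icc 1 (k * n)) ∧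
  ∀ i j, 1 ≤ i → i < k → 1 ≤ j → j ≤ n → F i j < F (i + 1) j

/-- The entries of `F` in columns `i, …, i + j - 1` are in the same relative order as the
`k × j` pattern `P`; i.e. `F` has a `P`-match starting at position `i`. -/
def MatchAt (j k : ℕ) (P F : ℕ → ℕ → ℕ) (i : ℕ) : Prop :=
  ∀ a b c d, 1 ≤ a → a ≤ k → 1 ≤ b → b ≤ j → 1 ≤ c → c ≤ k → 1 ≤ d → d ≤ j →
    (F a (i - 1 + b) < F c (i - 1 + d) ↔ P a b < P c d)

/-- `full_n^Υ`: the number of fillings `F ∈ F_{n,k}` having `Υ`-matches starting at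
every position `1, …, n-1` (for two-column patterns `Υ ⊆ F_{2,k}`). -/
noncomputable def fullCount (n k : ℕ) (U : Set (ℕ → ℕ → ℕ)) : ℕ :=
  Nat.card {F : ℕ → ℕ → ℕ // IsFilling n k F ∧
    ∀ i, 1 ≤ i → i ≤ n - 1 → ∃ P ∈ U, MatchAt 2 k P F i}

/-- `Υ-mch^{(2)}(F)`: the number of even positions `1 ≤ i ≤ n-1` at which `F` has an
`Υ`-match. -/
noncomputable def mch2Count (n k : ℕ) (U : Set (ℕ → ℕ → ℕ)) (F : ℕ → ℕ → ℕ) : ℕ :=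
  Set.ncard {i | Even i ∧ 1 ≤ i ∧ i ≤ n - 1 ∧ ∃ P ∈ U, MatchAt 2 k P F i}

/-- `F^{(2),Υ}_{n,k}`: fillings with `Υ`-matches starting at every odd position
`1 ≤ i ≤ n-1`. -/
def OddFull (n k : ℕ) (U : Set (ℕ → ℕ → ℕ)) (F : ℕ → ℕ → ℕ) : Prop :=
  IsFilling n k F ∧ ∀ i, Odd i → i ≤ n - 1 → ∃ P ∈ U, MatchAt 2 k P F i

/-!
Write `A_m = ∑_{F ∈ F^{(2)}_{m,k}} x ^ mch^{(2)}(F)`. Expand each `x ^ mch^{(2)}(F)` as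
`∏_{i even} (1 + (x - 1) [F has a match at i])` and sort the terms by the first even position `b`
whose factor `1` is chosen: the terms with no such `b` come from fillings matching everywhere,
the others from fillings matching at every position `< b`. Cutting such a filling after column `b`
is a bijection onto triples (the `kb` entries of the first `b` columns, a full filling of width
`b`, a filling in `F^{(2)}_{m-b,k}`), whence
`A_m = (x-1)^{(m-1)/2} full_m + ∑_b C(km, kb) full_b (x-1)^{b/2-1} A_{m-b}`,
which after division by `(km)!` is the coefficient identity of the claimed product.
-/

open Finset

lemma Nat.cast_choose_mul_inv_factorial (K : Type*) [Field K] [CharZero K] {n a : ℕ}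
    (h : a ≤ n) : (n.choose a : K) * (n.factorial : K)⁻¹ =
      (a.factorial : K)⁻¹ * ((n - a).factorial : K)⁻¹ := by
  have : (n.factorial : K) ≠ 0 := Nat.cast_ne_zero.2 n.factorial_ne_zero
  rw [Nat.cast_choose K h]
  field_simp

/-- Expanding `x ^ #(s.filter p) = ∏ (1 + (x - 1) [p i])` and sorting the terms by the first
`i ∈ s` whose factor `1` is chosen. -/
theorem Finset.pow_card_filter_eq_add_sum {R ι : Type*} [CommRing R] [LinearOrder ι] (s : Finset ι)
    (p : ι → Prop) [DecidablePred p] (x : R) :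
    x ^ #(s.filter p) = (if ∀ i ∈ s, p i then (x - 1) ^ #s else 0) +
      ∑ i ∈ s, (if ∀ j ∈ s, j < i → p j then (x - 1) ^ #(s.filter (· < i)) else 0) *
        x ^ #(s.filter fun j => i < j ∧ p j) := by
  have hprod : ∀ t : Finset ι, ∏ j ∈ t, (if p j then x else 1) = x ^ #(t.filter p) := fun t => by
    rw [Finset.prod_ite, Finset.prod_const, Finset.prod_const_one, mul_one]
  have hsub := Finset.prod_sub_ordered s (fun j => if p j then x else 1) fun _ => 1
  have hite : ∀ j, ((if p j then x else 1) - 1) = if p j then x - 1 else 0 := fun j => by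
    split_ifs <;> simp
  simp only [hite, Finset.prod_ite_zero, Finset.prod_const, one_mul, hprod,
    Finset.filter_filter, Finset.mem_filter, and_imp] at hsub
  rw [hsub, sub_add_cancel]

namespace Filling

/-- The position of `x` in `T`, counted from `1`; `0` if `x ∉ T`. -/
noncomputable def rank (T : Finset ℕ) (x : ℕ) : ℕ :=
  if h : x ∈ T then ((T.orderIsoOfFin rfl).symm ⟨x, h⟩ : ℕ) + 1 else 0

/-- The `r`-th smallest element of `T`, counted from `1`; `0` if `r ∉ [1, #T]`. -/
noncomputable def unrank (T : Finset ℕ) (r : ℕ) : ℕ :=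
  if h : 1 ≤ r ∧ r ≤ #T then T.orderIsoOfFin rfl ⟨r - 1, by omega⟩ else 0

section Rank

variable {T : Finset ℕ} {x r : ℕ}

lemma rank_of_notMem (h : x ∉ T) : rank T x = 0 := dif_neg h

@[simp] lemma unrank_zero : unrank T 0 = 0 := dif_neg (by omega)

lemma rank_mem_Icc (h : x ∈ T) : rank T x ∈ Set.Icc 1 #T := by
  rw [rank, dif_pos h]
  exact ⟨by omega, ((T.orderIsoOfFin rfl).symm ⟨x, h⟩).isLt⟩

lemma rank_orderIsoOfFin (i : Fin #T) : rank T (T.orderIsoOfFin rfl i) = i + 1 := by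
  rw [rank, dif_pos (Finset.coe_mem _), Subtype.coe_eta, OrderIso.symm_apply_apply]

lemma unrank_eq (h : r ∈ Set.Icc 1 #T) :
    unrank T r = T.orderIsoOfFin rfl ⟨r - 1, by obtain ⟨h1, h2⟩ := h; omega⟩ :=
  dif_pos (show 1 ≤ r ∧ r ≤ #T from h)

lemma unrank_mem (h : r ∈ Set.Icc 1 #T) : unrank T r ∈ T := by
  rw [unrank_eq h]
  exact Finset.coe_mem _

lemma unrank_rank (h : x ∈ T) : unrank T (rank T x) = x := by
  rw [unrank_eq (rank_mem_Icc h)]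
  simp [rank, h]

lemma rank_unrank (h : r ∈ Set.Icc 1 #T) : rank T (unrank T r) = r := by
  rw [unrank_eq h, rank_orderIsoOfFin]
  exact Nat.sub_add_cancel h.1

lemma strictMonoOn_rank : StrictMonoOn (rank T) T := by
  intro x hx y hy hxy
  simp only [rank, dif_pos (Finset.mem_coe.1 hx), dif_pos (Finset.mem_coe.1 hy),
    Nat.add_lt_add_iff_right, ← Fin.lt_def, OrderIso.lt_iff_lt]
  exact hxy

lemma bijOn_rank : Set.BijOn (rank T) T (Set.Icc 1 #T) :=
  Set.InvOn.bijOn ⟨fun _ h => unrank_rank h, fun _ h => rank_unrank h⟩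
    (fun _ h => rank_mem_Icc h) (fun _ h => unrank_mem h)

lemma bijOn_unrank : Set.BijOn (unrank T) (Set.Icc 1 #T) T :=
  Set.InvOn.bijOn ⟨fun _ h => rank_unrank h, fun _ h => unrank_rank h⟩
    (fun _ h => unrank_mem h) (fun _ h => rank_mem_Icc h)

lemma strictMonoOn_unrank : StrictMonoOn (unrank T) (Set.Icc 1 #T) := by
  intro r hr s hs hrs
  rwa [← strictMonoOn_rank.lt_iff_lt (unrank_mem hr) (unrank_mem hs), rank_unrank hr,
    rank_unrank hs]

end Rank

def cells (k n : ℕ) : Set (ℕ × ℕ) := Set.Icc 1 k ×ˢ Set.Icc 1 n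

@[simp] lemma mem_cells {k n : ℕ} {p : ℕ × ℕ} :
    p ∈ cells k n ↔ 1 ≤ p.1 ∧ p.1 ≤ k ∧ 1 ≤ p.2 ∧ p.2 ≤ n := by
  simp only [cells, Set.mem_prod, Set.mem_Icc, and_assoc]

lemma cells_mono {k b n : ℕ} (h : b ≤ n) : cells k b ⊆ cells k n :=
  Set.prod_mono le_rfl (Set.Icc_subset_Icc_right h)

lemma coe_product_Icc (k n : ℕ) :
    ((Finset.Icc 1 k ×ˢ Finset.Icc 1 n : Finset (ℕ × ℕ)) : Set (ℕ × ℕ)) = cells k n := by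
  rw [Finset.coe_product, Finset.coe_Icc, Finset.coe_Icc]
  rfl

lemma bijOn_shift (k b m : ℕ) :
    Set.BijOn (fun p : ℕ × ℕ => (p.1, p.2 + b)) (cells k m) (cells k (b + m) \ cells k b) :=
  Set.InvOn.bijOn (f' := fun p => (p.1, p.2 - b))
    ⟨fun p _ => by simp, fun p hp => by
      simp only [Set.mem_sdiff, mem_cells] at hp
      ext <;> simp only; omega⟩
    (fun p hp => by simp only [Set.mem_sdiff, mem_cells] at hp ⊢; omega)
    (fun p hp => by simp only [Set.mem_sdiff, mem_cells] at hp ⊢; omega)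

def IsFillingWith (n k : ℕ) (V : Set ℕ) (F : ℕ → ℕ → ℕ) : Prop :=
  (∀ i j, F i j ≠ 0 → 1 ≤ i ∧ i ≤ k ∧ 1 ≤ j ∧ j ≤ n) ∧
  Set.BijOn (fun p : ℕ × ℕ => F p.1 p.2) (cells k n) V ∧
  ∀ i j, 1 ≤ i → i < k → 1 ≤ j → j ≤ n → F i j < F (i + 1) j

lemma _root_.IsFilling.isFillingWith {n k : ℕ} {F : ℕ → ℕ → ℕ} (hF : IsFilling n k F) :
    IsFillingWith n k (Set.Icc 1 (k * n)) F := hF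

def truncate (b : ℕ) (F : ℕ → ℕ → ℕ) : ℕ → ℕ → ℕ := fun i j => if j ≤ b then F i j else 0

def dropCols (b : ℕ) (F : ℕ → ℕ → ℕ) : ℕ → ℕ → ℕ := fun i j => if j = 0 then 0 else F i (j + b)

def glue (b : ℕ) (G H : ℕ → ℕ → ℕ) : ℕ → ℕ → ℕ := fun i j => if j ≤ b then G i j else H i (j - b)

def leftValues (k b : ℕ) (F : ℕ → ℕ → ℕ) : Finset ℕ :=
  (Finset.Icc 1 k ×ˢ Finset.Icc 1 b).image fun p => F p.1 p.2

lemma coe_leftValues (k b : ℕ) (F : ℕ → ℕ → ℕ) :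
    (leftValues k b F : Set ℕ) = (fun p : ℕ × ℕ => F p.1 p.2) '' cells k b := by
  rw [leftValues, Finset.coe_image, coe_product_Icc]

lemma mem_leftValues {k b i j : ℕ} {F : ℕ → ℕ → ℕ} (h : (i, j) ∈ cells k b) :
    F i j ∈ leftValues k b F := by
  rw [← Finset.mem_coe, coe_leftValues]
  exact ⟨(i, j), h, rfl⟩

lemma _root_.IsFilling.ext {n k : ℕ} {F G : ℕ → ℕ → ℕ} (hF : IsFilling n k F) (hG : IsFilling n k G)
    (h : ∀ i j, (i, j) ∈ cells k n → F i j = G i j) : F = G := by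
  funext i j
  by_cases hij : (i, j) ∈ cells k n
  · exact h i j hij
  · rw [not_imp_comm.1 (hF.1 i j) (mem_cells.not.1 hij),
      not_imp_comm.1 (hG.1 i j) (mem_cells.not.1 hij)]

namespace IsFillingWith

variable {n m k b : ℕ} {V W : Set ℕ} {F G H : ℕ → ℕ → ℕ}

lemma mem {i j : ℕ} (hF : IsFillingWith n k V F) (h : (i, j) ∈ cells k n) : F i j ∈ V :=
  hF.2.1.mapsTo h

lemma comp {φ : ℕ → ℕ} (hF : IsFillingWith n k V F) (hφ : Set.BijOn φ V W)
    (hmono : StrictMonoOn φ V) (h0 : φ 0 = 0) : IsFillingWith n k W fun i j => φ (F i j) := by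
  refine ⟨fun i j h => hF.1 i j fun h' => h (by simp only [h', h0]), hφ.comp hF.2.1,
    fun i j hi hik hj hjn => hmono (hF.mem ?_) (hF.mem ?_) (hF.2.2 i j hi hik hj hjn)⟩ <;>
  · simp only [mem_cells]; omega

lemma truncate (hF : IsFillingWith n k V F) (hb : b ≤ n) :
    IsFillingWith b k (leftValues k b F) (Filling.truncate b F) := by
  refine ⟨fun i j h => ?_, ?_, fun i j hi hik hj hjb => ?_⟩
  · by_cases hj : j ≤ b
    · simp only [Filling.truncate, if_pos hj] at h
      have := hF.1 i j h
      omega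
    · simp [Filling.truncate, hj] at h
  · rw [coe_leftValues]
    refine (hF.2.1.subset_left (cells_mono hb)).congr fun p hp => ?_
    simp only [mem_cells] at hp
    simp [Filling.truncate, hp.2.2.2]
  · simp only [Filling.truncate, if_pos hjb]
    exact hF.2.2 i j hi hik hj (by omega)

lemma leftValues_subset (hF : IsFillingWith n k V F) (hb : b ≤ n) :
    (leftValues k b F : Set ℕ) ⊆ V := by
  rw [coe_leftValues]
  exact (hF.2.1.mapsTo.mono_left (cells_mono hb)).image_subset

lemma card_leftValues (hF : IsFillingWith n k V F) (hb : b ≤ n) :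
    #(leftValues k b F) = k * b := by
  rw [leftValues, Finset.card_image_of_injOn, Finset.card_product, Nat.card_Icc, Nat.card_Icc,
    Nat.add_sub_cancel, Nat.add_sub_cancel]
  rw [coe_product_Icc]
  exact hF.2.1.injOn.mono (cells_mono hb)

lemma dropCols (hF : IsFillingWith n k V F) (hb : b ≤ n) :
    IsFillingWith (n - b) k (V \ leftValues k b F) (Filling.dropCols b F) := by
  have hn : b + (n - b) = n := by omega
  refine ⟨fun i j h => ?_, ?_, fun i j hi hik hj hjn => ?_⟩
  · by_cases hj : j = 0
    · simp [Filling.dropCols, hj] at h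
    · simp only [Filling.dropCols, if_neg hj] at h
      have := hF.1 i (j + b) h
      omega
  · have hrest := hF.2.1.subset_left (Set.sdiff_subset (t := cells k b))
    rw [hF.2.1.injOn.image_sdiff_subset (cells_mono hb), hF.2.1.image_eq, ← coe_leftValues] at hrest
    rw [← hn] at hrest
    refine (hrest.comp (bijOn_shift k b (n - b))).congr fun p hp => ?_
    simp only [mem_cells] at hp
    simp only [Function.comp, Filling.dropCols, if_neg (show p.2 ≠ 0 by omega)]
  · simp only [Filling.dropCols, if_neg (show j ≠ 0 by omega)]
    exact hF.2.2 i (j + b) hi hik (by omega) (by omega)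

lemma glue (hG : IsFillingWith b k V G) (hH : IsFillingWith m k W H) (hVW : Disjoint V W) :
    IsFillingWith (b + m) k (V ∪ W) (Filling.glue b G H) := by
  refine ⟨fun i j h => ?_, ?_, fun i j hi hik hj hjn => ?_⟩
  · by_cases hj : j ≤ b
    · simp only [Filling.glue, if_pos hj] at h
      have := hG.1 i j h
      omega
    · simp only [Filling.glue, if_neg hj] at h
      have := hH.1 i (j - b) h
      omega
  · have hleft : Set.BijOn (fun p : ℕ × ℕ => Filling.glue b G H p.1 p.2) (cells k b) V :=
      hG.2.1.congr fun p hp => by simp only [mem_cells] at hp; simp [Filling.glue, hp.2.2.2]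
    have hright : Set.BijOn (fun p : ℕ × ℕ => Filling.glue b G H p.1 p.2)
        (cells k (b + m) \ cells k b) W := by
      refine (hH.2.1.comp ((bijOn_shift k b m).symm (g := fun p => (p.1, p.2 - b))
        ⟨fun p hp => ?_, fun p _ => by simp⟩)).congr fun p hp => ?_
      all_goals simp only [Set.mem_sdiff, mem_cells] at hp
      · ext <;> simp only; omega
      · simp only [Filling.glue, Function.comp, if_neg (show ¬p.2 ≤ b by omega)]
    rw [← Set.union_sdiff_cancel (cells_mono (Nat.le_add_right b m))]
    refine hleft.union hright ((Set.injOn_union Set.disjoint_sdiff_right).2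
      ⟨hleft.injOn, hright.injOn, fun p hp q hq hpq => ?_⟩)
    exact Set.disjoint_left.1 hVW (hleft.mapsTo hp) (hpq ▸ hright.mapsTo hq)
  · by_cases hjb : j ≤ b
    · simp only [Filling.glue, if_pos hjb]
      exact hG.2.2 i j hi hik hj hjb
    · simp only [Filling.glue, if_neg hjb]
      exact hH.2.2 i (j - b) hi hik (by omega) (by omega)

end IsFillingWith

lemma matchAt_iff_of_strictMonoOn {j k i i' : ℕ} {P F G : ℕ → ℕ → ℕ} {φ : ℕ → ℕ} {V : Set ℕ}
    (hφ : StrictMonoOn φ V)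
    (hV : ∀ a c, 1 ≤ a → a ≤ k → 1 ≤ c → c ≤ j → F a (i - 1 + c) ∈ V)
    (hG : ∀ a c, 1 ≤ a → a ≤ k → 1 ≤ c → c ≤ j → G a (i' - 1 + c) = φ (F a (i - 1 + c))) :
    MatchAt j k P G i' ↔ MatchAt j k P F i := by
  refine forall₄_congr fun a c a' c' => ⟨fun h => ?_, fun h => ?_⟩ <;>
  · intro ha hak hc hcj ha' hak' hc' hcj'
    rw [← h ha hak hc hcj ha' hak' hc' hcj', hG a c ha hak hc hcj, hG a' c' ha' hak' hc' hcj',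
      hφ.lt_iff_lt (hV a c ha hak hc hcj) (hV a' c' ha' hak' hc' hcj')]

def HasMatch (k : ℕ) (U : Set (ℕ → ℕ → ℕ)) (F : ℕ → ℕ → ℕ) (i : ℕ) : Prop :=
  ∃ P ∈ U, MatchAt 2 k P F i

lemma hasMatch_iff_of_strictMonoOn {k i i' : ℕ} {U : Set (ℕ → ℕ → ℕ)} {F G : ℕ → ℕ → ℕ}
    {φ : ℕ → ℕ} {V : Set ℕ} (hφ : StrictMonoOn φ V)
    (hV : ∀ a c, 1 ≤ a → a ≤ k → 1 ≤ c → c ≤ 2 → F a (i - 1 + c) ∈ V)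
    (hG : ∀ a c, 1 ≤ a → a ≤ k → 1 ≤ c → c ≤ 2 → G a (i' - 1 + c) = φ (F a (i - 1 + c))) :
    HasMatch k U G i' ↔ HasMatch k U F i :=
  exists_congr fun _ => and_congr_right fun _ => matchAt_iff_of_strictMonoOn hφ hV hG

noncomputable def leftPart (k b : ℕ) (F : ℕ → ℕ → ℕ) : ℕ → ℕ → ℕ :=
  fun i j => rank (leftValues k b F) (truncate b F i j)

noncomputable def rightPart (k b n : ℕ) (F : ℕ → ℕ → ℕ) : ℕ → ℕ → ℕ :=
  fun i j => rank (Finset.Icc 1 (k * n) \ leftValues k b F) (dropCols b F i j)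

noncomputable def join (k b n : ℕ) (T : Finset ℕ) (G H : ℕ → ℕ → ℕ) : ℕ → ℕ → ℕ :=
  glue b (fun i j => unrank T (G i j)) fun i j => unrank (Finset.Icc 1 (k * n) \ T) (H i j)

section Split

variable {n k b : ℕ} {F G H : ℕ → ℕ → ℕ} {T : Finset ℕ}

lemma card_Icc_sdiff (hT : T ⊆ Finset.Icc 1 (k * n)) (hTc : #T = k * b) :
    #(Finset.Icc 1 (k * n) \ T) = k * (n - b) := by
  rw [Finset.card_sdiff_of_subset hT, Nat.card_Icc, hTc, Nat.mul_sub, Nat.add_sub_cancel]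

lemma leftValues_subset_Icc (hF : IsFilling n k F) (hb : b ≤ n) :
    leftValues k b F ⊆ Finset.Icc 1 (k * n) := by
  rw [← Finset.coe_subset, Finset.coe_Icc]
  exact hF.isFillingWith.leftValues_subset hb

lemma mem_Icc_sdiff_leftValues {i j : ℕ} (hF : IsFilling n k F) (hb : b ≤ n)
    (h : (i, j) ∈ cells k (n - b)) : F i (j + b) ∈ Finset.Icc 1 (k * n) \ leftValues k b F := by
  have := (hF.isFillingWith.dropCols hb).mem h
  rwa [dropCols, if_neg (by simp only [mem_cells] at h; omega), ← Finset.coe_Icc,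
    ← Finset.coe_sdiff, Finset.mem_coe] at this

lemma isFilling_leftPart (hF : IsFilling n k F) (hb : b ≤ n) :
    IsFilling b k (leftPart k b F) := by
  have h0 : rank (leftValues k b F) 0 = 0 :=
    rank_of_notMem fun h => by simpa using leftValues_subset_Icc hF hb h
  have := (hF.isFillingWith.truncate hb).comp bijOn_rank strictMonoOn_rank h0
  rwa [hF.isFillingWith.card_leftValues hb] at this

lemma isFilling_rightPart (hF : IsFilling n k F) (hb : b ≤ n) :
    IsFilling (n - b) k (rightPart k b n F) := by
  have h0 : rank (Finset.Icc 1 (k * n) \ leftValues k b F) 0 = 0 := rank_of_notMem (by simp)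
  have hF' := hF.isFillingWith.dropCols hb
  rw [← Finset.coe_Icc, ← Finset.coe_sdiff] at hF'
  have := hF'.comp bijOn_rank strictMonoOn_rank h0
  rwa [card_Icc_sdiff (leftValues_subset_Icc hF hb) (hF.isFillingWith.card_leftValues hb)] at this

lemma isFilling_join (hb : b ≤ n) (hT : T ⊆ Finset.Icc 1 (k * n)) (hTc : #T = k * b)
    (hG : IsFilling b k G) (hH : IsFilling (n - b) k H) : IsFilling n k (join k b n T G H) := by
  have hG' := hG.isFillingWith
  have hH' := hH.isFillingWith
  rw [← hTc] at hG'
  rw [← card_Icc_sdiff hT hTc] at hH'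
  have := (hG'.comp bijOn_unrank strictMonoOn_unrank unrank_zero).glue
    (hH'.comp bijOn_unrank strictMonoOn_unrank unrank_zero)
    (Finset.disjoint_coe.2 Finset.disjoint_sdiff)
  rwa [← Finset.coe_union, Finset.union_sdiff_of_subset hT, Finset.coe_Icc,
    Nat.add_sub_cancel' hb] at this

lemma hasMatch_leftPart {U : Set (ℕ → ℕ → ℕ)} {i : ℕ} (hi : 1 ≤ i) (hib : i + 1 ≤ b) :
    HasMatch k U (leftPart k b F) i ↔ HasMatch k U F i := by
  refine hasMatch_iff_of_strictMonoOn (strictMonoOn_rank (T := leftValues k b F))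
    (fun a c ha hak hc hc2 => ?_) fun a c ha hak hc hc2 => ?_
  · exact mem_leftValues (by simp only [mem_cells]; omega)
  · simp only [leftPart, truncate, if_pos (show i - 1 + c ≤ b by omega)]

lemma hasMatch_rightPart {U : Set (ℕ → ℕ → ℕ)} {i : ℕ} (hF : IsFilling n k F) (hb : b ≤ n)
    (hi : 1 ≤ i) (hib : i + 1 ≤ n - b) :
    HasMatch k U (rightPart k b n F) i ↔ HasMatch k U F (i + b) := by
  refine hasMatch_iff_of_strictMonoOn
    (strictMonoOn_rank (T := Finset.Icc 1 (k * n) \ leftValues k b F))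
    (fun a c ha hak hc hc2 => ?_) fun a c ha hak hc hc2 => ?_
  · have := mem_Icc_sdiff_leftValues (i := a) (j := i - 1 + c) hF hb
      (by simp only [mem_cells]; omega)
    rwa [show i - 1 + c + b = i + b - 1 + c by omega] at this
  · simp only [rightPart, dropCols, if_neg (show i - 1 + c ≠ 0 by omega),
      show i - 1 + c + b = i + b - 1 + c by omega]

lemma join_split (hF : IsFilling n k F) (hb : b ≤ n) :
    join k b n (leftValues k b F) (leftPart k b F) (rightPart k b n F) = F := by
  refine (isFilling_join hb (leftValues_subset_Icc hF hb) (hF.isFillingWith.card_leftValues hb)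
    (isFilling_leftPart hF hb) (isFilling_rightPart hF hb)).ext hF fun i j hij => ?_
  simp only [mem_cells] at hij
  by_cases hj : j ≤ b
  · have hmem : F i j ∈ leftValues k b F := mem_leftValues (by simp only [mem_cells]; omega)
    simp only [join, glue, leftPart, truncate, if_pos hj, unrank_rank hmem]
  · have hmem := mem_Icc_sdiff_leftValues (i := i) (j := j - b) hF hb
      (by simp only [mem_cells]; omega)
    rw [Nat.sub_add_cancel (by omega)] at hmem
    simp only [join, glue, rightPart, dropCols, if_neg hj, if_neg (show j - b ≠ 0 by omega),
      Nat.sub_add_cancel (show b ≤ j by omega), unrank_rank hmem]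

lemma leftValues_join (hTc : #T = k * b) (hG : IsFilling b k G) :
    leftValues k b (join k b n T G H) = T := by
  have hGT := hG.isFillingWith
  rw [← hTc] at hGT
  rw [← Finset.coe_inj, coe_leftValues, ← (bijOn_unrank.comp hGT.2.1).image_eq]
  refine Set.EqOn.image_eq fun p hp => ?_
  simp only [mem_cells] at hp
  simp only [join, glue, Function.comp, if_pos hp.2.2.2]

lemma leftPart_join (hb : b ≤ n) (hT : T ⊆ Finset.Icc 1 (k * n)) (hTc : #T = k * b)
    (hG : IsFilling b k G) (hH : IsFilling (n - b) k H) :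
    leftPart k b (join k b n T G H) = G := by
  refine (isFilling_leftPart (isFilling_join hb hT hTc hG hH) hb).ext hG fun i j hij => ?_
  have hGij := hG.isFillingWith.mem hij
  rw [← hTc] at hGij
  simp only [mem_cells] at hij
  rw [leftPart, leftValues_join hTc hG]
  simp only [truncate, join, glue, if_pos hij.2.2.2, rank_unrank hGij]

lemma rightPart_join (hb : b ≤ n) (hT : T ⊆ Finset.Icc 1 (k * n)) (hTc : #T = k * b)
    (hG : IsFilling b k G) (hH : IsFilling (n - b) k H) :
    rightPart k b n (join k b n T G H) = H := by
  refine (isFilling_rightPart (isFilling_join hb hT hTc hG hH) hb).ext hH fun i j hij => ?_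
  have hHij := hH.isFillingWith.mem hij
  rw [← card_Icc_sdiff hT hTc] at hHij
  simp only [mem_cells] at hij
  rw [rightPart, leftValues_join hTc hG]
  simp only [dropCols, join, glue, if_neg (show j ≠ 0 by omega),
    if_neg (show ¬j + b ≤ b by omega), Nat.add_sub_cancel, rank_unrank hHij]

end Split

def evens (N : ℕ) : Finset ℕ := (Finset.Icc 1 (N / 2)).image (2 * ·)

lemma mem_evens {N i : ℕ} : i ∈ evens N ↔ Even i ∧ 1 ≤ i ∧ i ≤ N := by
  simp only [evens, Finset.mem_image, Finset.mem_Icc, Nat.even_iff]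
  constructor
  · rintro ⟨j, hj, rfl⟩
    omega
  · intro h
    exact ⟨i / 2, by omega, by omega⟩

lemma card_evens (N : ℕ) : #(evens N) = N / 2 := by
  rw [evens, Finset.card_image_of_injective _ (mul_right_injective₀ two_ne_zero), Nat.card_Icc,
    Nat.add_sub_cancel]

lemma filter_evens_lt {N b : ℕ} (hb : b ∈ evens N) : (evens N).filter (· < b) = evens (b - 1) := by
  ext i
  simp only [Finset.mem_filter, mem_evens, Nat.even_iff] at hb ⊢
  omega

theorem mk_odd_mul_mk_even_eq {R : Type*} [CommRing R] (α β γ : ℕ → R)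
    (h : ∀ m, m % 2 = 1 → α m = γ m + ∑ b ∈ evens (m - 1), β b * α (m - b)) :
    PowerSeries.mk (fun m => if m % 2 = 1 then α m else 0) *
        PowerSeries.mk (fun m => if m = 0 then 1 else if m % 2 = 0 then -β m else 0) =
      PowerSeries.mk fun m => if m % 2 = 1 then γ m else 0 := by
  ext m
  rw [mul_comm, PowerSeries.coeff_mul, Finset.Nat.sum_antidiagonal_eq_sum_range_succ_mk]
  simp only [PowerSeries.coeff_mk]
  split_ifs with hm
  · have hsub : insert 0 (evens (m - 1)) ⊆ Finset.range (m + 1) := fun j hj => by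
      rw [Finset.mem_insert, mem_evens] at hj
      rw [Finset.mem_range]
      omega
    rw [← Finset.sum_subset hsub fun j _ hj => ?_, Finset.sum_insert (by simp [mem_evens]),
      if_pos rfl, Nat.sub_zero, if_pos hm, one_mul, h m hm]
    · have hterm : ∀ b ∈ evens (m - 1),
          ((if b = 0 then 1 else if b % 2 = 0 then -β b else 0) *
            if (m - b) % 2 = 1 then α (m - b) else 0) = -(β b * α (m - b)) := fun b hb => by
        rw [mem_evens, Nat.even_iff] at hb
        rw [if_neg (by omega), if_pos hb.1, if_pos (by omega), neg_mul]
      rw [Finset.sum_congr rfl hterm, Finset.sum_neg_distrib, add_neg_cancel_right]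
    · rw [Finset.mem_insert, mem_evens, Nat.even_iff] at hj
      split_ifs <;> first | omega | simp
  · refine Finset.sum_eq_zero fun j _ => ?_
    split_ifs <;> first | omega | simp

section Counting

open scoped Classical

lemma finite_setOf_isFilling (n k : ℕ) : {F | IsFilling n k F}.Finite := by
  let S : Finset (ℕ × ℕ) := Finset.Icc 1 k ×ˢ Finset.Icc 1 n
  have hS : ∀ {p}, p ∈ S ↔ p ∈ cells k n := by
    intro p
    rw [← Finset.mem_coe, coe_product_Icc]
  refine (Set.finite_range fun g : S → Fin (k * n + 1) =>
    fun i j => if h : (i, j) ∈ S then (g ⟨(i, j), h⟩ : ℕ) else 0).subset fun F hF => ?_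
  refine ⟨fun p => ⟨F p.1.1 p.1.2, Nat.lt_succ_of_le (hF.2.1.mapsTo (hS.1 p.2)).2⟩,
    funext₂ fun i j => ?_⟩
  dsimp only
  split_ifs with h
  · rfl
  · exact (not_imp_comm.1 (hF.1 i j) (mem_cells.not.1 (hS.not.1 h))).symm

noncomputable def fillings (n k : ℕ) : Finset (ℕ → ℕ → ℕ) := (finite_setOf_isFilling n k).toFinset

@[simp] lemma mem_fillings {n k : ℕ} {F : ℕ → ℕ → ℕ} : F ∈ fillings n k ↔ IsFilling n k F :=
  Set.Finite.mem_toFinset _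

def AllMatch (k : ℕ) (U : Set (ℕ → ℕ → ℕ)) (n : ℕ) (F : ℕ → ℕ → ℕ) : Prop :=
  ∀ i, 1 ≤ i → i ≤ n - 1 → HasMatch k U F i

def OddMatch (k : ℕ) (U : Set (ℕ → ℕ → ℕ)) (n : ℕ) (F : ℕ → ℕ → ℕ) : Prop :=
  ∀ i, Odd i → i ≤ n - 1 → HasMatch k U F i

noncomputable def fullFillings (n k : ℕ) (U : Set (ℕ → ℕ → ℕ)) : Finset (ℕ → ℕ → ℕ) :=
  (fillings n k).filter (AllMatch k U n)

noncomputable def oddFullFillings (n k : ℕ) (U : Set (ℕ → ℕ → ℕ)) : Finset (ℕ → ℕ → ℕ) :=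
  (fillings n k).filter (OddMatch k U n)

noncomputable def oddFullSum {R : Type*} [CommRing R] (n k : ℕ) (U : Set (ℕ → ℕ → ℕ)) (x : R) :
    R :=
  ∑ F ∈ oddFullFillings n k U, x ^ mch2Count n k U F

variable {n m k b : ℕ} {U : Set (ℕ → ℕ → ℕ)} {F : ℕ → ℕ → ℕ} {R : Type*} [CommRing R]

lemma fullCount_eq_card : fullCount n k U = #(fullFillings n k U) := by
  rw [fullCount, ← Nat.card_eq_finsetCard]
  exact Nat.card_congr (Equiv.subtypeEquivRight fun F => by
    simp only [fullFillings, Finset.mem_filter, mem_fillings, AllMatch, HasMatch])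

lemma mch2Count_eq_card : mch2Count n k U F = #((evens (n - 1)).filter (HasMatch k U F)) := by
  rw [mch2Count, ← Set.ncard_coe_finset]
  congr 1
  ext i
  simp only [Set.mem_ofPred_eq, Finset.coe_filter, mem_evens, HasMatch, and_assoc]

lemma finsum_oddFull_eq_oddFullSum (x : R) :
    ∑ᶠ F ∈ {F | OddFull n k U F}, x ^ mch2Count n k U F = oddFullSum n k U x := by
  have : {F | OddFull n k U F} = ↑(oddFullFillings n k U) := by
    ext F
    simp only [Set.mem_ofPred_eq, oddFullFillings, Finset.coe_filter, mem_fillings, OddFull,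
      OddMatch, HasMatch]
  rw [this, finsum_mem_coe_finset, oddFullSum]

lemma filter_oddFullFillings_eq_fullFillings :
    (oddFullFillings n k U).filter (fun F => ∀ i ∈ evens (n - 1), HasMatch k U F i) =
      fullFillings n k U := by
  ext F
  simp only [oddFullFillings, fullFillings, Finset.mem_filter, mem_fillings, AllMatch, OddMatch,
    mem_evens, and_assoc]
  refine and_congr_right fun _ => ⟨fun ⟨hodd, heven⟩ i hi hin => ?_,
    fun h => ⟨fun i hi hin => h i hi.pos hin, fun i ⟨_, hi, hin⟩ => h i hi hin⟩⟩
  rcases Nat.even_or_odd i with he | ho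
  · exact heven i ⟨he, hi, hin⟩
  · exact hodd i ho hin

lemma oddMatch_and_hasMatch_lt_iff (hF : IsFilling m k F) (hb : b ∈ evens (m - 1)) :
    (OddMatch k U m F ∧ ∀ j ∈ evens (m - 1), j < b → HasMatch k U F j) ↔
      AllMatch k U b (leftPart k b F) ∧ OddMatch k U (m - b) (rightPart k b m F) := by
  rw [mem_evens, Nat.even_iff] at hb
  have hL : ∀ i, 1 ≤ i → i ≤ b - 1 → (HasMatch k U (leftPart k b F) i ↔ HasMatch k U F i) :=
    fun i h1 h2 => hasMatch_leftPart h1 (by omega)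
  have hR : ∀ i, 1 ≤ i → i ≤ m - b - 1 →
      (HasMatch k U (rightPart k b m F) i ↔ HasMatch k U F (i + b)) :=
    fun i h1 h2 => hasMatch_rightPart hF (by omega) h1 (by omega)
  constructor
  · rintro ⟨hodd, hpre⟩
    refine ⟨fun i h1 h2 => (hL i h1 h2).2 ?_, fun i hi h2 => (hR i hi.pos h2).2 (hodd _ ?_ ?_)⟩
    · rcases Nat.even_or_odd i with he | ho
      · exact hpre i (mem_evens.2 ⟨he, h1, by omega⟩) (by omega)
      · exact hodd i ho (by omega)
    · rw [Nat.odd_iff] at hi ⊢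
      omega
    · omega
  · rintro ⟨hleft, hright⟩
    refine ⟨fun i hi h2 => ?_, fun j hj hjb =>
      (hL j (mem_evens.1 hj).2.1 (by omega)).1 (hleft j (mem_evens.1 hj).2.1 (by omega))⟩
    rw [Nat.odd_iff] at hi
    rcases lt_or_gt_of_ne (show i ≠ b by omega) with hib | hib
    · exact (hL i (by omega) (by omega)).1 (hleft i (by omega) (by omega))
    · have := (hR (i - b) (by omega) (by omega)).1
        (hright (i - b) (by rw [Nat.odd_iff]; omega) (by omega))
      rwa [Nat.sub_add_cancel hib.le] at this

lemma card_filter_hasMatch_gt_eq (hF : IsFilling m k F) (hb : b ∈ evens (m - 1)) :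
    #((evens (m - 1)).filter fun j => b < j ∧ HasMatch k U F j) =
      mch2Count (m - b) k U (rightPart k b m F) := by
  rw [mch2Count_eq_card]
  rw [mem_evens, Nat.even_iff] at hb
  refine Finset.card_nbij' (· - b) (· + b) (fun j hj => ?_) (fun j hj => ?_) (fun j hj => ?_)
    fun j hj => ?_
  all_goals simp only [Finset.coe_filter, Set.mem_ofPred_eq, mem_evens, Nat.even_iff] at hj ⊢
  · refine ⟨by omega, (hasMatch_rightPart hF (by omega) (by omega) (by omega)).2 ?_⟩
    rw [Nat.sub_add_cancel (by omega)]
    exact hj.2.2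
  · exact ⟨by omega, by omega, (hasMatch_rightPart hF (by omega) (by omega) (by omega)).1 hj.2⟩
  · omega
  · omega

lemma sum_filter_hasMatch_lt_eq (hb : b ∈ evens (m - 1)) (x : R) :
    ∑ F ∈ (oddFullFillings m k U).filter (fun F => ∀ j ∈ evens (m - 1), j < b → HasMatch k U F j),
      x ^ #((evens (m - 1)).filter fun j => b < j ∧ HasMatch k U F j) =
    (((k * m).choose (k * b) * fullCount b k U : ℕ) : R) * oddFullSum (m - b) k U x := by
  have hbm : b ≤ m := by rw [mem_evens] at hb; omega
  calc _ = ∑ q ∈ ((Finset.Icc 1 (k * m)).powersetCard (k * b) ×ˢ fullFillings b k U) ×ˢ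
        oddFullFillings (m - b) k U, x ^ mch2Count (m - b) k U q.2 := by
        refine Finset.sum_nbij' (fun F => ((leftValues k b F, leftPart k b F), rightPart k b m F))
          (fun q => join k b m q.1.1 q.1.2 q.2) (fun F hF => ?_) (fun q hq => ?_) (fun F hF => ?_)
          (fun q hq => ?_) fun F hF => ?_
        all_goals simp only [Finset.mem_filter, Finset.mem_product,
          Finset.mem_powersetCard, oddFullFillings, fullFillings, mem_fillings] at *
        · obtain ⟨hl, hr⟩ := (oddMatch_and_hasMatch_lt_iff hF.1.1 hb).1 ⟨hF.1.2, hF.2⟩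
          exact ⟨⟨⟨leftValues_subset_Icc hF.1.1 hbm, hF.1.1.isFillingWith.card_leftValues hbm⟩,
            isFilling_leftPart hF.1.1 hbm, hl⟩, isFilling_rightPart hF.1.1 hbm, hr⟩
        · obtain ⟨⟨⟨hT, hTc⟩, hG, hl⟩, hH, hr⟩ := hq
          have hJ := isFilling_join hbm hT hTc hG hH
          have := (oddMatch_and_hasMatch_lt_iff (U := U) hJ hb).2
            ⟨by rwa [leftPart_join hbm hT hTc hG hH], by rwa [rightPart_join hbm hT hTc hG hH]⟩
          exact ⟨⟨hJ, this.1⟩, this.2⟩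
        · exact join_split hF.1.1 hbm
        · obtain ⟨⟨⟨hT, hTc⟩, hG, -⟩, hH, -⟩ := hq
          rw [leftValues_join hTc hG, leftPart_join hbm hT hTc hG hH,
            rightPart_join hbm hT hTc hG hH]
        · rw [card_filter_hasMatch_gt_eq hF.1.1 hb]
    _ = _ := by
      simp only [Finset.sum_product, Finset.sum_const, Finset.card_product,
        Finset.card_powersetCard, Nat.card_Icc, Nat.add_sub_cancel, ← fullCount_eq_card,
        nsmul_eq_mul, oddFullSum]

theorem oddFullSum_eq (m k : ℕ) (U : Set (ℕ → ℕ → ℕ)) (x : R) :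
    oddFullSum m k U x = (x - 1) ^ ((m - 1) / 2) * (fullCount m k U : R) +
      ∑ b ∈ evens (m - 1), (x - 1) ^ (b / 2 - 1) *
        ((((k * m).choose (k * b) * fullCount b k U : ℕ) : R) * oddFullSum (m - b) k U x) := by
  rw [oddFullSum, Finset.sum_congr rfl fun F _ => by
      rw [mch2Count_eq_card, Finset.pow_card_filter_eq_add_sum],
    Finset.sum_add_distrib, Finset.sum_comm, ← Finset.sum_filter, Finset.sum_const]
  congr 1
  · rw [card_evens, nsmul_eq_mul, mul_comm, fullCount_eq_card,
      ← filter_oddFullFillings_eq_fullFillings]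
    congr
  refine Finset.sum_congr rfl fun b hb => ?_
  have hexp : #((evens (m - 1)).filter (· < b)) = b / 2 - 1 := by
    rw [filter_evens_lt hb, card_evens]
    rw [mem_evens, Nat.even_iff] at hb
    omega
  simp only [ite_mul, zero_mul]
  rw [← Finset.sum_filter, hexp, ← Finset.mul_sum]
  congr 1
  convert sum_filter_hasMatch_lt_eq (k := k) (U := U) hb x

end Counting

end Filling

theorem stmt9_general (k : ℕ) (U : Set (ℕ → ℕ → ℕ)) :
    (PowerSeries.mk fun m => if m % 2 = 1 then
        Polynomial.C (((k * m).factorial : ℚ))⁻¹ *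
          ∑ᶠ F ∈ {F : ℕ → ℕ → ℕ | OddFull m k U F},
            (Polynomial.X : Polynomial ℚ) ^ mch2Count m k U F
      else 0) *
    (PowerSeries.mk fun m => if m = 0 then (1 : Polynomial ℚ) else
        if m % 2 = 0 then
          -((Polynomial.X - 1) ^ (m / 2 - 1) *
            Polynomial.C ((fullCount m k U : ℚ) / ((k * m).factorial : ℚ)))
        else 0) =
    PowerSeries.mk fun m => if m % 2 = 1 then
        (Polynomial.X - 1) ^ ((m - 1) / 2) *
          Polynomial.C ((fullCount m k U : ℚ) / ((k * m).factorial : ℚ))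
      else 0 := by
  refine Filling.mk_odd_mul_mk_even_eq _ _ _ fun m _ => ?_
  simp only [Filling.finsum_oddFull_eq_oddFullSum]
  rw [Filling.oddFullSum_eq, mul_add, Finset.mul_sum]
  congr 1
  · rw [div_eq_mul_inv, map_mul, map_natCast]
    ring
  · refine Finset.sum_congr rfl fun b hb => ?_
    have hbm : b ≤ m := by rw [Filling.mem_evens] at hb; omega
    have key := congrArg Polynomial.C
      (Nat.cast_choose_mul_inv_factorial ℚ (Nat.mul_le_mul_left k hbm))
    rw [← Nat.mul_sub, map_mul, map_mul, map_natCast] at key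
    rw [div_eq_mul_inv, Nat.cast_mul, map_mul, ← map_natCast Polynomial.C (fullCount b k U)]
    linear_combination ((Polynomial.X - 1) ^ (b / 2 - 1) *
      Polynomial.C (fullCount b k U : ℚ) * Filling.oddFullSum (m - b) k U Polynomial.X) * key

/-- Theorem: `(Σ_{n≥1} (t^{2n-1}/(k(2n-1))!) Σ_{F ∈ F^{(2),Υ}_{2n-1,k}} x^{Υ-mch^{(2)}(F)}) ·
(1 - Σ_{n≥1} (x-1)^{n-1} t^{2n} full_{2n}^Υ/(2kn)!)
  = Σ_{n≥1} (x-1)^{n-1} t^{2n-1} full_{2n-1}^Υ/(k(2n-1))!` as formal power series in `t`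
over `ℚ[x]` (odd coefficients are indexed by `m = 2n - 1`, even ones by `m = 2n`). -/
theorem stmt9 (k : ℕ) (hk : 1 ≤ k) (U : Set (ℕ → ℕ → ℕ))
    (hU : ∀ P ∈ U, IsFilling 2 k P) :
    (PowerSeries.mk fun m => if m % 2 = 1 then
        Polynomial.C (((k * m).factorial : ℚ))⁻¹ *
          ∑ᶠ F ∈ {F : ℕ → ℕ → ℕ | OddFull m k U F},
            (Polynomial.X : Polynomial ℚ) ^ mch2Count m k U F
      else 0) *
    (PowerSeries.mk fun m => if m = 0 then (1 : Polynomial ℚ) else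
        if m % 2 = 0 then
          -((Polynomial.X - 1) ^ (m / 2 - 1) *
            Polynomial.C ((fullCount m k U : ℚ) / ((k * m).factorial : ℚ)))
        else 0) =
    PowerSeries.mk fun m => if m % 2 = 1 then
        (Polynomial.X - 1) ^ ((m - 1) / 2) *
          Polynomial.C ((fullCount m k U : ℚ) / ((k * m).factorial : ℚ))
      else 0 :=
  stmt9_general k U
end

section
/- Let k ≥ 1 and let Υ ⊆ F_{2,k}. Then the following identity of formal power series in t over ℚ holds: (1 + Σ_{n≥1} Alt_{2n}^Υ t^{2n}/(2kn)!) · (1 + Σ_{n≥1} (−1)^n t^{2n} full_{2n}^Υ/(2kn)!) = 1. -/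
/-- `Alt_n^Υ`: the number of `Υ`-alternating fillings `F ∈ F_{n,k}`, i.e. those with
`Υ`-matches starting at every odd position `i ≤ n-1` and at no even position
`1 ≤ i ≤ n-1`. -/
noncomputable def altCount (n k : ℕ) (U : Set (ℕ → ℕ → ℕ)) : ℕ :=
  Nat.card {F : ℕ → ℕ → ℕ // IsFilling n k F ∧
    (∀ i, Odd i → i ≤ n - 1 → ∃ P ∈ U, MatchAt 2 k P F i) ∧
    (∀ i, Even i → 1 ≤ i → i ≤ n - 1 → ¬ ∃ P ∈ U, MatchAt 2 k P F i)}

/-! Put `s = t²`. Comparing coefficients of `sⁿ`, it suffices that for `n ≥ 1`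
`∑_{a+b=n} (-1)^b C(2kn, 2ka) Alt_{2a} full_{2b} = 0`.
A filling of `2a + 2b` columns whose first `2a` columns are `Υ`-alternating and whose last `2b`
columns are `Υ`-full amounts to a choice of the `2ka` values in the first `2a` columns together
with the standardizations of both sides, an alternating filling and a full one; so the sum counts
pairs (filling of `2n` columns, cut after column `2a` of this kind) with sign `(-1)^b`. Moving
the cut two columns left when there is a match at position `2a` (or nothing lies to its right),
and two columns right otherwise, is a sign-reversing involution on these pairs. -/

namespace Finset

/-- Counting from `1`, with junk value `0` out of range. -/
noncomputable def nthSmallest (S : Finset ℕ) (v : ℕ) : ℕ :=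
  if h : v - 1 < S.card then (S.orderIsoOfFin rfl ⟨v - 1, h⟩ : ℕ) else 0

/-- Counting from `1`, with junk value `0` for `x ∉ S`. -/
noncomputable def rankIn (S : Finset ℕ) (x : ℕ) : ℕ :=
  if h : x ∈ S then ((S.orderIsoOfFin rfl).symm ⟨x, h⟩ : ℕ) + 1 else 0

variable {S : Finset ℕ} {x y v w : ℕ}

lemma rankIn_mem_Icc (h : x ∈ S) : rankIn S x ∈ Set.Icc 1 S.card := by
  simp only [rankIn, dif_pos h, Set.mem_Icc, le_add_iff_nonneg_left, zero_le, true_and]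
  exact ((S.orderIsoOfFin rfl).symm ⟨x, h⟩).isLt

lemma nthSmallest_mem (hv : v ∈ Set.Icc 1 S.card) : nthSmallest S v ∈ S := by
  obtain ⟨h1, h2⟩ := hv
  rw [nthSmallest, dif_pos (by omega)]
  exact Subtype.prop _

lemma nthSmallest_rankIn (h : x ∈ S) : nthSmallest S (rankIn S x) = x := by
  have hlt := ((S.orderIsoOfFin rfl).symm ⟨x, h⟩).isLt
  simp only [rankIn, dif_pos h, nthSmallest, Nat.add_sub_cancel, dif_pos hlt, Fin.eta,
    OrderIso.apply_symm_apply]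

lemma rankIn_nthSmallest (hv : v ∈ Set.Icc 1 S.card) : rankIn S (nthSmallest S v) = v := by
  obtain ⟨h1, h2⟩ := hv
  have hlt : v - 1 < S.card := by omega
  have hmem := nthSmallest_mem (S := S) ⟨h1, h2⟩
  have hval : (⟨nthSmallest S v, hmem⟩ : S) = S.orderIsoOfFin rfl ⟨v - 1, hlt⟩ := by
    simp only [nthSmallest, dif_pos hlt]
  rw [rankIn, dif_pos hmem, hval, OrderIso.symm_apply_apply, Fin.val_mk]
  omega

lemma rankIn_lt_rankIn (hx : x ∈ S) (hy : y ∈ S) : rankIn S x < rankIn S y ↔ x < y := by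
  simp only [rankIn, dif_pos hx, dif_pos hy, Nat.add_lt_add_iff_right, ← Fin.lt_def,
    OrderIso.lt_iff_lt, Subtype.mk_lt_mk]

lemma nthSmallest_lt_nthSmallest (hv : v ∈ Set.Icc 1 S.card) (hw : w ∈ Set.Icc 1 S.card) :
    nthSmallest S v < nthSmallest S w ↔ v < w := by
  rw [← rankIn_lt_rankIn (nthSmallest_mem hv) (nthSmallest_mem hw), rankIn_nthSmallest hv,
    rankIn_nthSmallest hw]

lemma bijOn_rankIn : Set.BijOn (rankIn S) S (Set.Icc 1 S.card) :=
  Set.InvOn.bijOn ⟨fun _ hx => nthSmallest_rankIn hx, fun _ hv => rankIn_nthSmallest hv⟩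
    (fun _ hx => rankIn_mem_Icc hx) (fun _ hv => nthSmallest_mem hv)

end Finset

namespace IsFilling

variable {n k i j i' j' : ℕ} {F : ℕ → ℕ → ℕ}

lemma apply_eq_zero (hF : IsFilling n k F) (h : ¬(1 ≤ i ∧ i ≤ k ∧ 1 ≤ j ∧ j ≤ n)) :
    F i j = 0 :=
  by_contra fun hz => h (hF.1 i j hz)

lemma apply_mem (hF : IsFilling n k F) (hi : i ∈ Set.Icc 1 k) (hj : j ∈ Set.Icc 1 n) :
    F i j ∈ Set.Icc 1 (k * n) :=
  hF.2.1.mapsTo (Set.mk_mem_prod hi hj)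

lemma eq_of_apply_eq (hF : IsFilling n k F) (hi : i ∈ Set.Icc 1 k) (hj : j ∈ Set.Icc 1 n)
    (hi' : i' ∈ Set.Icc 1 k) (hj' : j' ∈ Set.Icc 1 n) (h : F i j = F i' j') :
    i = i' ∧ j = j' :=
  Prod.ext_iff.mp (hF.2.1.injOn (Set.mk_mem_prod hi hj) (Set.mk_mem_prod hi' hj') h)

lemma exists_apply_eq (hF : IsFilling n k F) {v : ℕ} (hv : v ∈ Set.Icc 1 (k * n)) :
    ∃ i ∈ Set.Icc 1 k, ∃ j ∈ Set.Icc 1 n, F i j = v := by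
  obtain ⟨⟨i, j⟩, ⟨hi, hj⟩, h⟩ := hF.2.1.surjOn hv
  exact ⟨i, hi, j, hj, h⟩

lemma apply_le (hF : IsFilling n k F) (i j : ℕ) : F i j ≤ k * n := by
  by_cases h : 1 ≤ i ∧ i ≤ k ∧ 1 ≤ j ∧ j ≤ n
  · exact (hF.apply_mem ⟨h.1, h.2.1⟩ ⟨h.2.2.1, h.2.2.2⟩).2
  · simp [hF.apply_eq_zero h]

end IsFilling

instance (n k : ℕ) : Finite {F : ℕ → ℕ → ℕ // IsFilling n k F} := by
  refine Finite.of_injective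
    (fun F (x : Fin (k + 1) × Fin (n + 1)) => (⟨F.1 x.1 x.2, by
      have := F.2.apply_le x.1 x.2; omega⟩ : Fin (k * n + 1))) fun F G hFG => ?_
  ext i j
  by_cases h : 1 ≤ i ∧ i ≤ k ∧ 1 ≤ j ∧ j ≤ n
  · simpa using congrArg Fin.val (congrFun hFG (⟨i, by omega⟩, ⟨j, by omega⟩))
  · rw [F.2.apply_eq_zero h, G.2.apply_eq_zero h]

lemma isFilling_zero_iff {k : ℕ} {F : ℕ → ℕ → ℕ} : IsFilling 0 k F ↔ F = 0 := by
  refine ⟨fun hF => funext₂ fun i j => hF.apply_eq_zero (by omega), ?_⟩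
  rintro rfl
  refine ⟨fun i j h => absurd rfl h, ?_, fun i j _ _ _ h => by omega⟩
  simp only [mul_zero, Set.Icc_eq_empty_of_lt zero_lt_one, Set.prod_empty]
  exact Set.bijOn_empty _

lemma card_isFilling_zero (k : ℕ) {Q : (ℕ → ℕ → ℕ) → Prop} (hQ : Q 0) :
    Nat.card {F : ℕ → ℕ → ℕ // IsFilling 0 k F ∧ Q F} = 1 :=
  Nat.card_eq_one_iff_exists.mpr ⟨⟨0, isFilling_zero_iff.mpr rfl, hQ⟩,
    fun F => Subtype.ext (isFilling_zero_iff.mp F.2.1)⟩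

noncomputable def standardize (k q : ℕ) (S : Finset ℕ) (G : ℕ → ℕ → ℕ) : ℕ → ℕ → ℕ :=
  fun i j => if 1 ≤ i ∧ i ≤ k ∧ 1 ≤ j ∧ j ≤ q then S.rankIn (G i j) else 0

lemma isFilling_standardize {k q : ℕ} {S : Finset ℕ} {G : ℕ → ℕ → ℕ} (hS : S.card = k * q)
    (hG : Set.BijOn (fun x : ℕ × ℕ => G x.1 x.2) (Set.Icc 1 k ×ˢ Set.Icc 1 q) S)
    (hmono : ∀ i j, 1 ≤ i → i < k → 1 ≤ j → j ≤ q → G i j < G (i + 1) j) :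
    IsFilling q k (standardize k q S G) := by
  refine ⟨fun i j h => by_contra fun hij => h (if_neg hij), ?_, fun i j h1 h2 h3 h4 => ?_⟩
  · rw [← hS]
    refine (Finset.bijOn_rankIn.comp hG).congr fun x ⟨⟨h1, h2⟩, h3, h4⟩ => ?_
    simp only [standardize, Function.comp_apply, if_pos (⟨h1, h2, h3, h4⟩ : _ ∧ _ ∧ _ ∧ _)]
  · have hi : i + 1 ∈ Set.Icc 1 k := ⟨by omega, h2⟩
    simp only [standardize, if_pos (⟨h1, h2.le, h3, h4⟩ : _ ∧ _ ∧ _ ∧ _),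
      if_pos (⟨hi.1, hi.2, h3, h4⟩ : _ ∧ _ ∧ _ ∧ _)]
    rw [Finset.rankIn_lt_rankIn (hG.mapsTo (x := (i, j)) ⟨⟨h1, h2.le⟩, h3, h4⟩)
      (hG.mapsTo (x := (i + 1, j)) ⟨hi, h3, h4⟩)]
    exact hmono i j h1 h2 h3 h4

lemma bijOn_cells_of_surjOn {n k : ℕ} {f : ℕ × ℕ → ℕ}
    (hm : Set.MapsTo f (Set.Icc 1 k ×ˢ Set.Icc 1 n) (Set.Icc 1 (k * n)))
    (hs : Set.SurjOn f (Set.Icc 1 k ×ˢ Set.Icc 1 n) (Set.Icc 1 (k * n))) :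
    Set.BijOn f (Set.Icc 1 k ×ˢ Set.Icc 1 n) (Set.Icc 1 (k * n)) := by
  refine ⟨hm, ?_, hs⟩
  have := Finset.injOn_of_surjOn_of_card_le (s := Finset.Icc 1 k ×ˢ Finset.Icc 1 n)
    (t := Finset.Icc 1 (k * n)) f (by simpa using hm) (by simpa using hs) (by simp)
  simpa using this

section Split

variable {k p q : ℕ} {F : ℕ → ℕ → ℕ}

def leftValues (k p : ℕ) (F : ℕ → ℕ → ℕ) : Finset ℕ :=
  (Finset.Icc 1 k ×ˢ Finset.Icc 1 p).image fun x => F x.1 x.2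

noncomputable def leftPart (k p : ℕ) (F : ℕ → ℕ → ℕ) : ℕ → ℕ → ℕ :=
  standardize k p (leftValues k p F) F

noncomputable def rightPart (k p q : ℕ) (F : ℕ → ℕ → ℕ) : ℕ → ℕ → ℕ :=
  standardize k q (Finset.Icc 1 (k * (p + q)) \ leftValues k p F) fun i j => F i (p + j)

lemma mem_leftValues {i j : ℕ} (hi : i ∈ Set.Icc 1 k) (hj : j ∈ Set.Icc 1 p) :
    F i j ∈ leftValues k p F :=
  Finset.mem_image_of_mem (fun x : ℕ × ℕ => F x.1 x.2) (a := (i, j)) (by simp_all)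

lemma injOn_leftBlock (hF : IsFilling (p + q) k F) :
    Set.InjOn (fun x : ℕ × ℕ => F x.1 x.2) (Set.Icc 1 k ×ˢ Set.Icc 1 p) :=
  hF.2.1.injOn.mono (Set.prod_mono le_rfl (Set.Icc_subset_Icc le_rfl (by omega)))

lemma bijOn_leftValues (hF : IsFilling (p + q) k F) :
    Set.BijOn (fun x : ℕ × ℕ => F x.1 x.2) (Set.Icc 1 k ×ˢ Set.Icc 1 p) (leftValues k p F) := by
  simpa [leftValues] using (injOn_leftBlock hF).bijOn_image

lemma card_leftValues (hF : IsFilling (p + q) k F) : (leftValues k p F).card = k * p := by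
  rw [leftValues, Finset.card_image_of_injOn (by simpa using injOn_leftBlock hF)]
  simp

lemma leftValues_subset (hF : IsFilling (p + q) k F) :
    leftValues k p F ⊆ Finset.Icc 1 (k * (p + q)) := by
  intro y hy
  obtain ⟨⟨i, j⟩, hx, rfl⟩ := Finset.mem_image.mp hy
  simp only [Finset.mem_product, Finset.mem_Icc] at hx
  simpa using hF.apply_mem hx.1 ⟨hx.2.1, by omega⟩

lemma bijOn_compl_leftValues (hF : IsFilling (p + q) k F) :
    Set.BijOn (fun x : ℕ × ℕ => F x.1 (p + x.2)) (Set.Icc 1 k ×ˢ Set.Icc 1 q)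
      ↑(Finset.Icc 1 (k * (p + q)) \ leftValues k p F : Finset ℕ) := by
  have hcol {j : ℕ} (hj : j ∈ Set.Icc 1 q) : p + j ∈ Set.Icc 1 (p + q) := ⟨by grind, by grind⟩
  refine ⟨fun ⟨i, j⟩ ⟨hi, hj⟩ => ?_, fun ⟨i, j⟩ ⟨hi, hj⟩ ⟨i', j'⟩ ⟨hi', hj'⟩ h => ?_,
    fun y hy => ?_⟩
  · simp only [Finset.coe_sdiff, Finset.coe_Icc, Set.mem_sdiff, Finset.mem_coe]
    refine ⟨hF.apply_mem hi (hcol hj), fun hmem => ?_⟩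
    obtain ⟨⟨i', j'⟩, hx, hx'⟩ := Finset.mem_image.mp hmem
    simp only [Finset.mem_product, Finset.mem_Icc] at hx
    have := hF.eq_of_apply_eq ⟨hx.1.1, hx.1.2⟩ ⟨hx.2.1, by omega⟩ hi (hcol hj) hx'
    grind
  · have := hF.eq_of_apply_eq hi (hcol hj) hi' (hcol hj') h
    grind
  · simp only [Finset.coe_sdiff, Finset.coe_Icc, Set.mem_sdiff, Finset.mem_coe] at hy
    obtain ⟨i, hi, j, hj, rfl⟩ := hF.exists_apply_eq hy.1
    have hjp : p < j := by_contra fun h => hy.2 (mem_leftValues hi ⟨hj.1, by omega⟩)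
    exact ⟨(i, j - p), ⟨hi, by omega, by grind⟩, by simp only [Nat.add_sub_cancel' hjp.le]⟩

lemma card_compl_leftValues (hF : IsFilling (p + q) k F) :
    (Finset.Icc 1 (k * (p + q)) \ leftValues k p F).card = k * q := by
  rw [Finset.card_sdiff_of_subset (leftValues_subset hF), card_leftValues hF, Nat.card_Icc,
    mul_add]
  omega

lemma isFilling_leftPart (hF : IsFilling (p + q) k F) : IsFilling p k (leftPart k p F) :=
  isFilling_standardize (card_leftValues hF) (bijOn_leftValues hF)
    fun i j h1 h2 h3 h4 => hF.2.2 i j h1 h2 h3 (by omega)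

lemma isFilling_rightPart (hF : IsFilling (p + q) k F) : IsFilling q k (rightPart k p q F) :=
  isFilling_standardize (card_compl_leftValues hF) (bijOn_compl_leftValues hF)
    fun i j h1 h2 h3 h4 => hF.2.2 i (p + j) h1 h2 (by omega) (by omega)

end Split

section Glue

variable {k p q : ℕ} {S : Finset ℕ} {L R : ℕ → ℕ → ℕ} {i j : ℕ}

noncomputable def glue (k p q : ℕ) (S : Finset ℕ) (L R : ℕ → ℕ → ℕ) : ℕ → ℕ → ℕ := fun i j =>
  if 1 ≤ i ∧ i ≤ k ∧ 1 ≤ j ∧ j ≤ p then S.nthSmallest (L i j)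
  else if 1 ≤ i ∧ i ≤ k ∧ p + 1 ≤ j ∧ j ≤ p + q then
    (Finset.Icc 1 (k * (p + q)) \ S).nthSmallest (R i (j - p))
  else 0

lemma glue_left (hi : i ∈ Set.Icc 1 k) (hj : j ∈ Set.Icc 1 p) :
    glue k p q S L R i j = S.nthSmallest (L i j) :=
  if_pos ⟨hi.1, hi.2, hj.1, hj.2⟩

lemma glue_right (hi : i ∈ Set.Icc 1 k) (hj : j ∈ Set.Icc 1 q) :
    glue k p q S L R i (p + j) = (Finset.Icc 1 (k * (p + q)) \ S).nthSmallest (R i j) := by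
  obtain ⟨⟨hi1, hi2⟩, hj1, hj2⟩ := And.intro hi hj
  rw [glue, if_neg (by omega), if_pos (by omega), Nat.add_sub_cancel_left]

variable (hS : S ∈ Finset.powersetCard (k * p) (Finset.Icc 1 (k * (p + q))))
  (hL : IsFilling p k L) (hR : IsFilling q k R)
include hS

lemma card_compl_of_mem_powersetCard : (Finset.Icc 1 (k * (p + q)) \ S).card = k * q := by
  obtain ⟨hsub, hcard⟩ := Finset.mem_powersetCard.mp hS
  rw [Finset.card_sdiff_of_subset hsub, hcard, Nat.card_Icc, mul_add]
  omega

include hL in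
lemma glue_left_mem (hi : i ∈ Set.Icc 1 k) (hj : j ∈ Set.Icc 1 p) :
    L i j ∈ Set.Icc 1 S.card ∧ glue k p q S L R i j ∈ S := by
  have hL' : L i j ∈ Set.Icc 1 S.card := (Finset.mem_powersetCard.mp hS).2 ▸ hL.apply_mem hi hj
  exact ⟨hL', glue_left hi hj ▸ Finset.nthSmallest_mem hL'⟩

include hR in
lemma glue_right_mem (hi : i ∈ Set.Icc 1 k) (hj : j ∈ Set.Icc 1 q) :
    R i j ∈ Set.Icc 1 (Finset.Icc 1 (k * (p + q)) \ S).card ∧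
      glue k p q S L R i (p + j) ∈ Finset.Icc 1 (k * (p + q)) \ S := by
  have hR' := card_compl_of_mem_powersetCard hS ▸ hR.apply_mem hi hj
  exact ⟨hR', glue_right hi hj ▸ Finset.nthSmallest_mem hR'⟩

include hL hR

lemma isFilling_glue : IsFilling (p + q) k (glue k p q S L R) := by
  have hsub := (Finset.mem_powersetCard.mp hS).1
  have hcard := (Finset.mem_powersetCard.mp hS).2
  have hsplit {j : ℕ} (hj : j ∈ Set.Icc 1 (p + q)) :
      j ∈ Set.Icc 1 p ∨ ∃ j' ∈ Set.Icc 1 q, j = p + j' := by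
    obtain ⟨hj1, hj2⟩ := hj
    by_cases hjp : j ≤ p
    · exact .inl ⟨hj1, hjp⟩
    · exact .inr ⟨j - p, ⟨by omega, by omega⟩, by omega⟩
  refine ⟨fun i j h => by_contra fun hij => h ?_, bijOn_cells_of_surjOn ?_ ?_,
    fun i j h1 h2 h3 h4 => ?_⟩
  · rw [glue, if_neg (by omega), if_neg (by omega)]
  · rintro ⟨i, j⟩ ⟨hi, hj⟩
    rcases hsplit hj with hj | ⟨j', hj', rfl⟩
    · simpa using hsub (glue_left_mem hS hL hi hj).2
    · simpa using (Finset.mem_sdiff.mp (glue_right_mem hS hR hi hj').2).1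
  · intro y hy
    by_cases hyS : y ∈ S
    · obtain ⟨i, hi, j, hj, hij⟩ := hL.exists_apply_eq (hcard ▸ Finset.rankIn_mem_Icc hyS)
      refine ⟨(i, j), ⟨hi, hj.1, by grind⟩, ?_⟩
      simp only [glue_left hi hj, hij, Finset.nthSmallest_rankIn hyS]
    · have hyT : y ∈ Finset.Icc 1 (k * (p + q)) \ S := by simp_all
      obtain ⟨i, hi, j, hj, hij⟩ := hR.exists_apply_eq
        (card_compl_of_mem_powersetCard hS ▸ Finset.rankIn_mem_Icc hyT)
      refine ⟨(i, p + j), ⟨hi, by grind, by grind⟩, ?_⟩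
      simp only [glue_right hi hj, hij, Finset.nthSmallest_rankIn hyT]
  · have hi : i ∈ Set.Icc 1 k := ⟨h1, h2.le⟩
    have hi' : i + 1 ∈ Set.Icc 1 k := ⟨by omega, h2⟩
    rcases hsplit ⟨h3, h4⟩ with hj | ⟨j, hj, rfl⟩
    · rw [glue_left hi hj, glue_left hi' hj, Finset.nthSmallest_lt_nthSmallest
        (glue_left_mem hS hL (R := R) hi hj).1 (glue_left_mem hS hL (R := R) hi' hj).1]
      exact hL.2.2 i j h1 h2 hj.1 hj.2
    · rw [glue_right hi hj, glue_right hi' hj, Finset.nthSmallest_lt_nthSmallest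
        (glue_right_mem hS hR (L := L) hi hj).1 (glue_right_mem hS hR (L := L) hi' hj).1]
      exact hR.2.2 i j h1 h2 hj.1 hj.2

end Glue

section RoundTrip

variable {k p q : ℕ}

lemma glue_split {F : ℕ → ℕ → ℕ} (hF : IsFilling (p + q) k F) :
    glue k p q (leftValues k p F) (leftPart k p F) (rightPart k p q F) = F := by
  funext i j
  by_cases hl : 1 ≤ i ∧ i ≤ k ∧ 1 ≤ j ∧ j ≤ p
  · have hi : i ∈ Set.Icc 1 k := ⟨hl.1, hl.2.1⟩
    have hj : j ∈ Set.Icc 1 p := ⟨hl.2.2.1, hl.2.2.2⟩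
    rw [glue_left hi hj, leftPart, standardize, if_pos hl,
      Finset.nthSmallest_rankIn (mem_leftValues hi hj)]
  by_cases hr : 1 ≤ i ∧ i ≤ k ∧ p + 1 ≤ j ∧ j ≤ p + q
  · obtain ⟨j, rfl⟩ : ∃ j', j = p + j' := ⟨j - p, by omega⟩
    have hi : i ∈ Set.Icc 1 k := ⟨hr.1, hr.2.1⟩
    have hj : j ∈ Set.Icc 1 q := ⟨by omega, by omega⟩
    rw [glue_right hi hj, rightPart, standardize, if_pos ⟨hi.1, hi.2, hj.1, hj.2⟩,
      Finset.nthSmallest_rankIn ((bijOn_compl_leftValues hF).mapsTo (x := (i, j)) ⟨hi, hj⟩)]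
  · rw [glue, if_neg hl, if_neg hr, hF.apply_eq_zero (by omega)]

variable {S : Finset ℕ} {L R : ℕ → ℕ → ℕ}
  (hS : S ∈ Finset.powersetCard (k * p) (Finset.Icc 1 (k * (p + q))))
  (hL : IsFilling p k L) (hR : IsFilling q k R)
include hS hL hR

lemma leftValues_glue : leftValues k p (glue k p q S L R) = S := by
  refine Finset.eq_of_subset_of_card_le (fun y hy => ?_) ?_
  · obtain ⟨⟨i, j⟩, hx, rfl⟩ := Finset.mem_image.mp hy
    simp only [Finset.mem_product, Finset.mem_Icc] at hx
    exact (glue_left_mem hS hL hx.1 hx.2).2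
  · rw [card_leftValues (isFilling_glue hS hL hR), (Finset.mem_powersetCard.mp hS).2]

lemma leftPart_glue : leftPart k p (glue k p q S L R) = L := by
  funext i j
  by_cases hl : 1 ≤ i ∧ i ≤ k ∧ 1 ≤ j ∧ j ≤ p
  · have hi : i ∈ Set.Icc 1 k := ⟨hl.1, hl.2.1⟩
    have hj : j ∈ Set.Icc 1 p := ⟨hl.2.2.1, hl.2.2.2⟩
    rw [leftPart, standardize, if_pos hl, leftValues_glue hS hL hR, glue_left hi hj,
      Finset.rankIn_nthSmallest (glue_left_mem hS hL (R := R) hi hj).1]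
  · rw [leftPart, standardize, if_neg hl, hL.apply_eq_zero hl]

lemma rightPart_glue : rightPart k p q (glue k p q S L R) = R := by
  funext i j
  by_cases hr : 1 ≤ i ∧ i ≤ k ∧ 1 ≤ j ∧ j ≤ q
  · have hi : i ∈ Set.Icc 1 k := ⟨hr.1, hr.2.1⟩
    have hj : j ∈ Set.Icc 1 q := ⟨hr.2.2.1, hr.2.2.2⟩
    rw [rightPart, standardize, if_pos hr, leftValues_glue hS hL hR, glue_right hi hj,
      Finset.rankIn_nthSmallest (glue_right_mem hS hR (L := L) hi hj).1]
  · rw [rightPart, standardize, if_neg hr, hR.apply_eq_zero hr]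

end RoundTrip

noncomputable def splitEquiv (k p q : ℕ) (A B : (ℕ → ℕ → ℕ) → Prop) :
    {F : ℕ → ℕ → ℕ // IsFilling (p + q) k F ∧ A (leftPart k p F) ∧ B (rightPart k p q F)} ≃
      {S : Finset ℕ // S ∈ Finset.powersetCard (k * p) (Finset.Icc 1 (k * (p + q)))} ×
        {L : ℕ → ℕ → ℕ // IsFilling p k L ∧ A L} × {R : ℕ → ℕ → ℕ // IsFilling q k R ∧ B R} where
  toFun F :=
    (⟨leftValues k p F, Finset.mem_powersetCard.mpr
        ⟨leftValues_subset F.2.1, card_leftValues F.2.1⟩⟩,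
      ⟨leftPart k p F, isFilling_leftPart F.2.1, F.2.2.1⟩,
      ⟨rightPart k p q F, isFilling_rightPart F.2.1, F.2.2.2⟩)
  invFun x :=
    ⟨glue k p q x.1 x.2.1 x.2.2, isFilling_glue x.1.2 x.2.1.2.1 x.2.2.2.1, by
      rw [leftPart_glue x.1.2 x.2.1.2.1 x.2.2.2.1, rightPart_glue x.1.2 x.2.1.2.1 x.2.2.2.1]
      exact ⟨x.2.1.2.2, x.2.2.2.2⟩⟩
  left_inv F := Subtype.ext (glue_split F.2.1)
  right_inv := fun ⟨⟨S, hS⟩, ⟨L, hL, _⟩, ⟨R, hR, _⟩⟩ =>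
    Prod.ext (Subtype.ext (leftValues_glue hS hL hR))
      (Prod.ext (Subtype.ext (leftPart_glue hS hL hR)) (Subtype.ext (rightPart_glue hS hL hR)))

lemma card_split (k p q : ℕ) (A B : (ℕ → ℕ → ℕ) → Prop) :
    Nat.card {F : ℕ → ℕ → ℕ // IsFilling (p + q) k F ∧ A (leftPart k p F) ∧
        B (rightPart k p q F)} =
      (k * (p + q)).choose (k * p) *
        (Nat.card {L : ℕ → ℕ → ℕ // IsFilling p k L ∧ A L} *
          Nat.card {R : ℕ → ℕ → ℕ // IsFilling q k R ∧ B R}) := by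
  rw [Nat.card_congr (splitEquiv k p q A B), Nat.card_prod, Nat.card_prod,
    Nat.card_eq_fintype_card (α := {S // S ∈ _}), Fintype.card_coe, Finset.card_powersetCard,
    Nat.card_Icc, Nat.add_sub_cancel]

section Matches

variable (k : ℕ) (U : Set (ℕ → ℕ → ℕ))

def HasMatch (F : ℕ → ℕ → ℕ) (i : ℕ) : Prop := ∃ P ∈ U, MatchAt 2 k P F i

def IsAlternating (n : ℕ) (F : ℕ → ℕ → ℕ) : Prop :=
  (∀ i, Odd i → i ≤ n - 1 → HasMatch k U F i) ∧
    ∀ i, Even i → 1 ≤ i → i ≤ n - 1 → ¬HasMatch k U F i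

def IsFull (n : ℕ) (F : ℕ → ℕ → ℕ) : Prop := ∀ i, 1 ≤ i → i ≤ n - 1 → HasMatch k U F i

def IsCut (p q : ℕ) (F : ℕ → ℕ → ℕ) : Prop :=
  IsAlternating k U p F ∧ ∀ i, 1 ≤ i → i ≤ q - 1 → HasMatch k U F (p + i)

variable {k U}

lemma hasMatch_congr {F G : ℕ → ℕ → ℕ} {i i' : ℕ}
    (h : ∀ a b c d, 1 ≤ a → a ≤ k → 1 ≤ b → b ≤ 2 → 1 ≤ c → c ≤ k → 1 ≤ d → d ≤ 2 →
      (F a (i - 1 + b) < F c (i - 1 + d) ↔ G a (i' - 1 + b) < G c (i' - 1 + d))) :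
    HasMatch k U F i ↔ HasMatch k U G i' := by
  refine exists_congr fun P => and_congr_right fun _ => ⟨fun hm => ?_, fun hm => ?_⟩ <;>
    intro a b c d ha1 ha2 hb1 hb2 hc1 hc2 hd1 hd2
  · rw [← h a b c d ha1 ha2 hb1 hb2 hc1 hc2 hd1 hd2]
    exact hm a b c d ha1 ha2 hb1 hb2 hc1 hc2 hd1 hd2
  · rw [h a b c d ha1 ha2 hb1 hb2 hc1 hc2 hd1 hd2]
    exact hm a b c d ha1 ha2 hb1 hb2 hc1 hc2 hd1 hd2

variable {p q : ℕ} {F : ℕ → ℕ → ℕ}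

lemma hasMatch_leftPart_iff {i : ℕ} (h1 : 1 ≤ i) (h2 : i + 1 ≤ p) :
    HasMatch k U (leftPart k p F) i ↔ HasMatch k U F i := by
  refine hasMatch_congr fun a b c d ha1 ha2 hb1 hb2 hc1 hc2 hd1 hd2 => ?_
  have hab : 1 ≤ a ∧ a ≤ k ∧ 1 ≤ i - 1 + b ∧ i - 1 + b ≤ p := by omega
  have hcd : 1 ≤ c ∧ c ≤ k ∧ 1 ≤ i - 1 + d ∧ i - 1 + d ≤ p := by omega
  simp only [leftPart, standardize, if_pos hab, if_pos hcd]
  exact Finset.rankIn_lt_rankIn (mem_leftValues ⟨ha1, ha2⟩ ⟨by omega, by omega⟩)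
    (mem_leftValues ⟨hc1, hc2⟩ ⟨by omega, by omega⟩)

lemma hasMatch_rightPart_iff (hF : IsFilling (p + q) k F) {i : ℕ} (h1 : 1 ≤ i)
    (h2 : i + 1 ≤ q) : HasMatch k U (rightPart k p q F) i ↔ HasMatch k U F (p + i) := by
  refine hasMatch_congr fun a b c d ha1 ha2 hb1 hb2 hc1 hc2 hd1 hd2 => ?_
  have hcol (e : ℕ) : p + i - 1 + e = p + (i - 1 + e) := by omega
  have hab : 1 ≤ a ∧ a ≤ k ∧ 1 ≤ i - 1 + b ∧ i - 1 + b ≤ q := by omega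
  have hcd : 1 ≤ c ∧ c ≤ k ∧ 1 ≤ i - 1 + d ∧ i - 1 + d ≤ q := by omega
  simp only [rightPart, standardize, if_pos hab, if_pos hcd, hcol]
  exact Finset.rankIn_lt_rankIn
    ((bijOn_compl_leftValues hF).mapsTo (x := (a, i - 1 + b)) ⟨⟨ha1, ha2⟩, by omega, by omega⟩)
    ((bijOn_compl_leftValues hF).mapsTo (x := (c, i - 1 + d)) ⟨⟨hc1, hc2⟩, by omega, by omega⟩)

lemma isCut_iff (hF : IsFilling (p + q) k F) :
    IsCut k U p q F ↔ IsAlternating k U p (leftPart k p F) ∧ IsFull k U q (rightPart k p q F) := by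
  refine and_congr ⟨fun ⟨hodd', heven⟩ => ⟨fun i hi hle => ?_, fun i hi h1 hle => ?_⟩,
    fun ⟨hodd', heven⟩ => ⟨fun i hi hle => ?_, fun i hi h1 hle => ?_⟩⟩
    (forall₃_congr fun i h1 hle => (hasMatch_rightPart_iff hF h1 (by omega)).symm)
  · have := hi.pos
    exact (hasMatch_leftPart_iff (p := p) this (by omega)).mpr (hodd' i hi hle)
  · rw [hasMatch_leftPart_iff (p := p) h1 (by omega)]
    exact heven i hi h1 hle
  · have := hi.pos
    exact (hasMatch_leftPart_iff (p := p) this (by omega)).mp (hodd' i hi hle)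
  · rw [← hasMatch_leftPart_iff (p := p) h1 (by omega)]
    exact heven i hi h1 hle

variable (k U p q)

lemma card_isCut :
    Nat.card {F : ℕ → ℕ → ℕ // IsFilling (p + q) k F ∧ IsCut k U p q F} =
      (k * (p + q)).choose (k * p) * (altCount p k U * fullCount q k U) := by
  refine (Nat.card_congr (Equiv.subtypeEquivRight fun F => and_congr_right isCut_iff)).trans ?_
  exact card_split k p q (IsAlternating k U p) (IsFull k U q)

end Matches

section Involution

open Finset

variable {k : ℕ} {U : Set (ℕ → ℕ → ℕ)} {F : ℕ → ℕ → ℕ} {a b : ℕ}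

lemma isCut_shiftLeft (hc : IsCut k U (2 * (a + 1)) (2 * b) F)
    (hm : b = 0 ∨ HasMatch k U F (2 * (a + 1))) :
    IsCut k U (2 * a) (2 * (b + 1)) F ∧ ¬(0 < a ∧ HasMatch k U F (2 * a)) := by
  obtain ⟨⟨hodd, heven⟩, hfull⟩ := hc
  refine ⟨⟨⟨fun i hi hle => hodd i hi (by omega), fun i hi h1 hle => heven i hi h1 (by omega)⟩,
    fun i h1 hle => ?_⟩, fun ⟨ha, hM⟩ => heven (2 * a) (even_two_mul a) (by omega) (by omega) hM⟩
  rcases (show i = 1 ∨ i = 2 ∨ 3 ≤ i by omega) with rfl | rfl | h3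
  · exact hodd (2 * a + 1) (odd_two_mul_add_one a) (by omega)
  · rcases hm with rfl | hm
    · omega
    · rwa [mul_add] at hm
  · have := hfull (i - 2) (by omega) (by omega)
    rwa [show 2 * (a + 1) + (i - 2) = 2 * a + i by omega] at this

lemma isCut_shiftRight (hc : IsCut k U (2 * a) (2 * (b + 1)) F)
    (hm : ¬(0 < a ∧ HasMatch k U F (2 * a))) :
    IsCut k U (2 * (a + 1)) (2 * b) F ∧ (b = 0 ∨ HasMatch k U F (2 * (a + 1))) := by
  obtain ⟨⟨hodd, heven⟩, hfull⟩ := hc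
  refine ⟨⟨⟨fun i hi hle => ?_, fun i hi h1 hle => ?_⟩, fun i h1 hle => ?_⟩, ?_⟩
  · obtain ⟨m, rfl⟩ := hi
    rcases (show m < a ∨ m = a by omega) with hm | rfl
    · exact hodd (2 * m + 1) (odd_two_mul_add_one m) (by omega)
    · exact hfull 1 le_rfl (by omega)
  · obtain ⟨m, rfl⟩ := hi
    rcases (show m + m < 2 * a ∨ m = a by omega) with hm' | rfl
    · exact heven (m + m) ⟨m, rfl⟩ h1 (by omega)
    · exact fun hM => hm ⟨by omega, by rwa [← two_mul] at hM⟩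
  · rw [show 2 * (a + 1) + i = 2 * a + (i + 2) by omega]
    exact hfull (i + 2) (by omega) (by omega)
  · rcases Nat.eq_zero_or_pos b with hb | hb
    · exact .inl hb
    · exact .inr (by simpa [mul_add] using hfull 2 (by omega) (by omega))

open Classical in
/-- A cut after column `2a` of a `2n`-column filling is encoded by `(a, b)` with `a + b = n`. -/
noncomputable def moveCut (k : ℕ) (U : Set (ℕ → ℕ → ℕ)) (F : ℕ → ℕ → ℕ) (x : ℕ × ℕ) : ℕ × ℕ :=
  if 0 < x.1 ∧ (x.2 = 0 ∨ HasMatch k U F (2 * x.1)) then (x.1 - 1, x.2 + 1)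
  else (x.1 + 1, x.2 - 1)

lemma moveCut_spec {n : ℕ} (hn : 1 ≤ n) {x : ℕ × ℕ} (hx : x ∈ antidiagonal n)
    (hc : IsCut k U (2 * x.1) (2 * x.2) F) :
    moveCut k U F x ∈ antidiagonal n ∧
      IsCut k U (2 * (moveCut k U F x).1) (2 * (moveCut k U F x).2) F ∧
      moveCut k U F (moveCut k U F x) = x ∧
      ((moveCut k U F x).2 = x.2 + 1 ∨ x.2 = (moveCut k U F x).2 + 1) := by
  obtain ⟨a, b⟩ := x
  rw [HasAntidiagonal.mem_antidiagonal] at hx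
  by_cases hD : 0 < a ∧ (b = 0 ∨ HasMatch k U F (2 * a))
  · obtain ⟨a, rfl⟩ : ∃ a', a = a' + 1 := ⟨a - 1, by omega⟩
    obtain ⟨hc', hnot⟩ := isCut_shiftLeft hc hD.2
    have hD' : ¬(0 < a ∧ (b + 1 = 0 ∨ HasMatch k U F (2 * a))) := by
      simpa only [Nat.add_one_ne_zero, false_or] using hnot
    have h1 : moveCut k U F (a + 1, b) = (a, b + 1) := by simp only [moveCut, if_pos hD]; rfl
    have h2 : moveCut k U F (a, b + 1) = (a + 1, b) := if_neg hD'
    rw [h1, h2, HasAntidiagonal.mem_antidiagonal]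
    exact ⟨by omega, hc', rfl, .inl rfl⟩
  · obtain ⟨b, rfl⟩ : ∃ b', b = b' + 1 := ⟨b - 1, by grind⟩
    have hm : ¬(0 < a ∧ HasMatch k U F (2 * a)) := by
      simpa only [Nat.add_one_ne_zero, false_or] using hD
    obtain ⟨hc', hD'⟩ := isCut_shiftRight hc hm
    have h1 : moveCut k U F (a, b + 1) = (a + 1, b) := if_neg hD
    have h2 : moveCut k U F (a + 1, b) = (a, b + 1) := by
      simp only [moveCut, if_pos (⟨Nat.succ_pos a, hD'⟩ : _ ∧ _)]; rfl
    rw [h1, h2, HasAntidiagonal.mem_antidiagonal]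
    exact ⟨by omega, hc', rfl, .inr rfl⟩

open Classical in
lemma sum_neg_one_pow_isCut {n : ℕ} (hn : 1 ≤ n) (F : ℕ → ℕ → ℕ) :
    ∑ x ∈ (antidiagonal n).filter (fun x => IsCut k U (2 * x.1) (2 * x.2) F),
      (-1 : ℤ) ^ x.2 = 0 := by
  have spec {x} (hx : x ∈ (antidiagonal n).filter
      (fun x => IsCut k U (2 * x.1) (2 * x.2) F)) := moveCut_spec hn
    (Finset.mem_filter.mp hx).1 (Finset.mem_filter.mp hx).2
  refine Finset.sum_involution (fun x _ => moveCut k U F x) (fun x hx => ?_)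
    (fun x hx _ h => ?_) (fun x hx => Finset.mem_filter.mpr ⟨(spec hx).1, (spec hx).2.1⟩)
    (fun x hx => (spec hx).2.2.1)
  · rcases (spec hx).2.2.2 with h | h <;> rw [h, pow_succ] <;> ring
  · rcases (spec hx).2.2.2 with h' | h' <;> rw [h] at h' <;> omega

end Involution

section KeyIdentity

open Finset

variable (k : ℕ) (U : Set (ℕ → ℕ → ℕ)) {n : ℕ}

lemma sum_card_isCut (hn : 1 ≤ n) :
    ∑ x ∈ antidiagonal n, (-1 : ℤ) ^ x.2 *
      Nat.card {F : ℕ → ℕ → ℕ // IsFilling (2 * n) k F ∧ IsCut k U (2 * x.1) (2 * x.2) F} = 0 := by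
  classical
  let _ : Fintype {F : ℕ → ℕ → ℕ // IsFilling (2 * n) k F} := Fintype.ofFinite _
  have hcard (x : ℕ × ℕ) :
      Nat.card {F : ℕ → ℕ → ℕ // IsFilling (2 * n) k F ∧ IsCut k U (2 * x.1) (2 * x.2) F} =
        #{F : {F : ℕ → ℕ → ℕ // IsFilling (2 * n) k F} | IsCut k U (2 * x.1) (2 * x.2) F} := by
    rw [Nat.card_congr (Equiv.subtypeSubtypeEquivSubtypeInter _ _).symm,
      Nat.card_eq_fintype_card, Fintype.card_subtype]
  simp only [hcard, card_filter, Nat.cast_sum, mul_sum]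
  rw [sum_comm]
  refine sum_eq_zero fun F _ => ?_
  rw [← sum_neg_one_pow_isCut (k := k) (U := U) hn F.1, sum_filter]
  exact sum_congr rfl fun x _ => by split_ifs <;> simp

lemma key_identity (hn : 1 ≤ n) :
    ∑ x ∈ antidiagonal n, (-1 : ℤ) ^ x.2 * ((k * (2 * n)).choose (k * (2 * x.1)) *
      (altCount (2 * x.1) k U * fullCount (2 * x.2) k U)) = 0 := by
  rw [← sum_card_isCut k U hn]
  refine sum_congr rfl fun x hx => ?_
  rw [show 2 * n = 2 * x.1 + 2 * x.2 by rw [← HasAntidiagonal.mem_antidiagonal.mp hx]; ring,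
    card_isCut]
  push_cast
  rfl

end KeyIdentity

section Series

open Finset PowerSeries

variable (k : ℕ) (U : Set (ℕ → ℕ → ℕ))

lemma altCount_zero : altCount 0 k U = 1 :=
  card_isFilling_zero k ⟨fun i hi hle => by have := hi.pos; omega, fun i _ h1 hle => by omega⟩

lemma fullCount_zero : fullCount 0 k U = 1 :=
  card_isFilling_zero k fun i h1 hle => by omega

-- The two factors of the theorem, as series in `s = t²`.
noncomputable def altSeries : PowerSeries ℚ :=
  mk fun n => (altCount (2 * n) k U : ℚ) / (k * (2 * n)).factorial

noncomputable def fullSeries : PowerSeries ℚ :=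
  mk fun n => (-1) ^ n * (fullCount (2 * n) k U : ℚ) / (k * (2 * n)).factorial

lemma coeff_altSeries_mul_coeff_fullSeries (a b : ℕ) :
    coeff a (altSeries k U) * coeff b (fullSeries k U) =
      ((-1) ^ b * ((k * (2 * (a + b))).choose (k * (2 * a)) *
        (altCount (2 * a) k U * fullCount (2 * b) k U)) : ℤ) / (k * (2 * (a + b))).factorial := by
  have hfac := Nat.add_choose_mul_factorial_mul_factorial (k * (2 * b)) (k * (2 * a))
  rw [show k * (2 * b) + k * (2 * a) = k * (2 * (a + b)) by ring] at hfac
  have hchoose : ((k * (2 * (a + b))).choose (k * (2 * a)) : ℚ) ≠ 0 :=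
    Nat.cast_ne_zero.mpr (Nat.choose_pos (Nat.mul_le_mul_left k (by omega))).ne'
  rw [altSeries, fullSeries, coeff_mk, coeff_mk, ← hfac]
  push_cast
  field_simp

lemma altSeries_mul_fullSeries : altSeries k U * fullSeries k U = 1 := by
  ext n
  rw [coeff_mul, coeff_one]
  rcases Nat.eq_zero_or_pos n with rfl | hn
  · simp [altSeries, fullSeries, altCount_zero, fullCount_zero]
  rw [if_neg hn.ne', ← zero_div ((k * (2 * n)).factorial : ℚ), ← Int.cast_zero,
    ← key_identity k U hn, Int.cast_sum, sum_div]
  refine sum_congr rfl fun x hx => ?_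
  rw [coeff_altSeries_mul_coeff_fullSeries, HasAntidiagonal.mem_antidiagonal.mp hx]

lemma mk_eq_expand_two {R : Type*} [CommRing R] (c : ℕ → R) (h0 : c 0 = 1) :
    mk (fun m => if m = 0 then 1 else if m % 2 = 0 then c m else 0) =
      expand 2 two_ne_zero (mk fun n => c (2 * n)) := by
  ext m
  rw [coeff_expand, coeff_mk, coeff_mk]
  rcases Nat.even_or_odd m with ⟨n, rfl⟩ | ⟨n, rfl⟩
  · rcases Nat.eq_zero_or_pos n with rfl | hn
    · simp [h0]
    · simp [hn.ne', ← two_mul]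
  · simp [Nat.add_mod]

end Series

theorem stmt10_general (k : ℕ) (U : Set (ℕ → ℕ → ℕ)) :
    (PowerSeries.mk fun m => if m = 0 then (1 : ℚ) else
        if m % 2 = 0 then (altCount m k U : ℚ) / ((k * m).factorial : ℚ) else 0) *
    (PowerSeries.mk fun m => if m = 0 then (1 : ℚ) else
        if m % 2 = 0 then
          (-1) ^ (m / 2) * (fullCount m k U : ℚ) / ((k * m).factorial : ℚ)
        else 0) = 1 := by
  rw [mk_eq_expand_two _ (by simp [altCount_zero]), mk_eq_expand_two _ (by simp [fullCount_zero]),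
    ← map_mul]
  simp only [Nat.mul_div_cancel_left _ two_pos]
  exact (congrArg _ (altSeries_mul_fullSeries k U)).trans (map_one _)

/-- Theorem: `(1 + Σ_{n≥1} Alt_{2n}^Υ t^{2n}/(2kn)!) ·
(1 + Σ_{n≥1} (-1)^n t^{2n} full_{2n}^Υ/(2kn)!) = 1` as formal power series in `t` over
`ℚ` (the coefficient of `t^m` is indexed by `m = 2n`). -/
theorem stmt10 (k : ℕ) (hk : 1 ≤ k) (U : Set (ℕ → ℕ → ℕ))
    (hU : ∀ P ∈ U, IsFilling 2 k P) :
    (PowerSeries.mk fun m => if m = 0 then (1 : ℚ) else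
        if m % 2 = 0 then (altCount m k U : ℚ) / ((k * m).factorial : ℚ) else 0) *
    (PowerSeries.mk fun m => if m = 0 then (1 : ℚ) else
        if m % 2 = 0 then
          (-1) ^ (m / 2) * (fullCount m k U : ℚ) / ((k * m).factorial : ℚ)
        else 0) = 1 :=
  stmt10_general k U
end

section
/- Let k ≥ 1 and let P ∈ F_{2,k} be the filling with P(i,1) = i and P(i,2) = k+i for 1 ≤ i ≤ k (first column 1,…,k, second column k+1,…,2k). Then full_n^P = 1 for all n ≥ 1; moreover the unique F ∈ F_{n,k} with P-matches starting at every position 1,…,n−1 is given by F(i,j) = (j−1)k + i. -/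
/-- The pattern `P ∈ F_{2,k}` with first column `1, …, k` and second column
`k+1, …, 2k` (cells outside the `k × 2` rectangle carry `0`). -/
def minPattern (k : ℕ) : ℕ → ℕ → ℕ := fun i j =>
  if 1 ≤ i ∧ i ≤ k then (if j = 1 then i else if j = 2 then k + i else 0) else 0

/-- The filling `F ∈ F_{n,k}` with `F(i,j) = (j-1)k + i` (cells outside the rectangle
carry `0`). -/
def minFilling (n k : ℕ) : ℕ → ℕ → ℕ := fun i j =>
  if 1 ≤ i ∧ i ≤ k ∧ 1 ≤ j ∧ j ≤ n then (j - 1) * k + i else 0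

namespace Stmt12Aux

/-- rank of a cell in reading order -/
lemma rank_shift {j k : ℕ} (hj : 1 ≤ j) : (j - 1) * k + k = j * k := by
  have h : (j - 1) + 1 = j := by omega
  calc (j - 1) * k + k = ((j - 1) + 1) * k := by ring
    _ = j * k := by rw [h]

lemma rank_lt {k a c j d : ℕ} (ha : a ≤ k) (hc : 1 ≤ c) (hj : 1 ≤ j)
    (hjd : j < d) : (j - 1) * k + a < (d - 1) * k + c := by
  have h1 : (j - 1) * k + k = j * k := rank_shift hj
  have h2 : j * k ≤ (d - 1) * k := Nat.mul_le_mul_right _ (by omega)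
  omega

lemma rank_inj {k a c j d : ℕ} (ha1 : 1 ≤ a) (ha2 : a ≤ k) (hc1 : 1 ≤ c)
    (hc2 : c ≤ k) (hj : 1 ≤ j) (hd : 1 ≤ d)
    (h : (j - 1) * k + a = (d - 1) * k + c) : a = c ∧ j = d := by
  rcases lt_trichotomy j d with hjd | hjd | hjd
  · exact absurd h (Nat.ne_of_lt (rank_lt ha2 hc1 hj hjd))
  · subst hjd; omega
  · exact absurd h.symm (Nat.ne_of_lt (rank_lt hc2 ha1 hd hjd))

section Unique

variable {n k : ℕ} {F : ℕ → ℕ → ℕ}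

/-- the crucial cross-column step coming from a `minPattern`-match -/
lemma cross (hk : 1 ≤ k)
    (hM : ∀ i, 1 ≤ i → i ≤ n - 1 → ∃ P ∈ ({minPattern k} : Set (ℕ → ℕ → ℕ)),
      MatchAt 2 k P F i)
    {j : ℕ} (hj1 : 1 ≤ j) (hj2 : j ≤ n - 1) : F k j < F 1 (j + 1) := by
  obtain ⟨P, hP, hm⟩ := hM j hj1 hj2
  rw [Set.mem_singleton_iff] at hP
  subst hP
  have h := hm k 1 1 2 hk le_rfl le_rfl (by norm_num) le_rfl hk (by norm_num) le_rfl
  have e1 : j - 1 + 1 = j := by omega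
  have e2 : j - 1 + 2 = j + 1 := by omega
  rw [e1, e2] at h
  rw [h]
  simp [minPattern, hk]

lemma lower (hk : 1 ≤ k) (hF : IsFilling n k F)
    (hM : ∀ i, 1 ≤ i → i ≤ n - 1 → ∃ P ∈ ({minPattern k} : Set (ℕ → ℕ → ℕ)),
      MatchAt 2 k P F i) :
    ∀ m a j, 1 ≤ a → a ≤ k → 1 ≤ j → j ≤ n → (j - 1) * k + a = m → m ≤ F a j := by
  intro m
  induction m using Nat.strong_induction_on with
  | _ m ih =>
    intro a j ha1 ha2 hj1 hj2 hrank
    rcases Nat.lt_or_ge 1 a with ha | ha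
    · -- a ≥ 2 : use the cell below
      have hcol := hF.2.2 (a - 1) j (by omega) (by omega) hj1 hj2
      have e : a - 1 + 1 = a := by omega
      rw [e] at hcol
      have hprev : (j - 1) * k + (a - 1) = m - 1 := by omega
      have hlt : m - 1 < m := by omega
      have := ih (m - 1) hlt (a - 1) j (by omega) (by omega) hj1 hj2 hprev
      omega
    · -- a = 1
      have ha' : a = 1 := by omega
      subst ha'
      rcases Nat.lt_or_ge 1 j with hj | hj
      · -- j ≥ 2 : use the top of the previous column
        have e : (j - 1 - 1) * k + k = (j - 1) * k := rank_shift (by omega)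
        have hprev : (j - 1 - 1) * k + k = m - 1 := by omega
        have hm2 : 1 ≤ m - 1 := by
          have : 1 ≤ (j - 1 - 1) * k + k := by omega
          omega
        have hlt : m - 1 < m := by omega
        have hle := ih (m - 1) hlt k (j - 1) hk le_rfl (by omega) (by omega) hprev
        have hc := cross (n := n) hk hM (j := j - 1) (by omega) (by omega)
        have ej : j - 1 + 1 = j := by omega
        rw [ej] at hc
        omega
      · -- j = 1, a = 1 : m = 1
        have hj' : j = 1 := by omega
        subst hj'
        have hmem : ((1 : ℕ), (1 : ℕ)) ∈ Set.Icc 1 k ×ˢ Set.Icc 1 n :=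
          ⟨Set.mem_Icc.mpr ⟨le_rfl, hk⟩, Set.mem_Icc.mpr ⟨le_rfl, hj2⟩⟩
        have := hF.2.1.1 hmem
        simp [Set.mem_Icc] at this
        omega

lemma upper (hk : 1 ≤ k) (hF : IsFilling n k F)
    (hM : ∀ i, 1 ≤ i → i ≤ n - 1 → ∃ P ∈ ({minPattern k} : Set (ℕ → ℕ → ℕ)),
      MatchAt 2 k P F i) :
    ∀ t a j, 1 ≤ a → a ≤ k → 1 ≤ j → j ≤ n → (j - 1) * k + a + t = k * n →
      F a j ≤ (j - 1) * k + a := by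
  intro t
  induction t with
  | zero =>
    intro a j ha1 ha2 hj1 hj2 hrank
    have hmem : ((a : ℕ), (j : ℕ)) ∈ Set.Icc 1 k ×ˢ Set.Icc 1 n :=
      ⟨Set.mem_Icc.mpr ⟨ha1, ha2⟩, Set.mem_Icc.mpr ⟨hj1, hj2⟩⟩
    have := hF.2.1.1 hmem
    simp [Set.mem_Icc] at this
    omega
  | succ t ih =>
    intro a j ha1 ha2 hj1 hj2 hrank
    rcases Nat.lt_or_ge a k with ha | ha
    · -- use the cell above
      have hcol := hF.2.2 a j ha1 ha hj1 hj2
      have := ih (a + 1) j (by omega) (by omega) hj1 hj2 (by omega)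
      omega
    · have ha' : a = k := by omega
      rw [ha'] at hrank ⊢
      have hsh : (j - 1) * k + k = j * k := rank_shift hj1
      have hjn : j < n := by
        have h2 : j * k < k * n := by omega
        rw [mul_comm k n] at h2
        exact Nat.lt_of_mul_lt_mul_right h2
      have hnext : (j + 1 - 1) * k + 1 + t = k * n := by
        have : (j + 1 - 1) * k = j * k := by norm_num
        omega
      have hle := ih 1 (j + 1) le_rfl hk (by omega) (by omega) hnext
      have hc := cross (n := n) hk hM hj1 (by omega)
      have : (j + 1 - 1) * k = j * k := by norm_num
      omega

lemma unique (hn : 1 ≤ n) (hk : 1 ≤ k) (hF : IsFilling n k F)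
    (hM : ∀ i, 1 ≤ i → i ≤ n - 1 → ∃ P ∈ ({minPattern k} : Set (ℕ → ℕ → ℕ)),
      MatchAt 2 k P F i) : F = minFilling n k := by
  funext a j
  by_cases hin : 1 ≤ a ∧ a ≤ k ∧ 1 ≤ j ∧ j ≤ n
  · obtain ⟨ha1, ha2, hj1, hj2⟩ := hin
    have hsh : (j - 1) * k + k = j * k := rank_shift hj1
    have hmul : j * k ≤ n * k := Nat.mul_le_mul_right _ hj2
    have hbound : (j - 1) * k + a ≤ k * n := by rw [mul_comm k n]; omega
    have h1 := lower hk hF hM ((j - 1) * k + a) a j ha1 ha2 hj1 hj2 rfl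
    have h2 := upper hk hF hM (k * n - ((j - 1) * k + a)) a j ha1 ha2 hj1 hj2 (by omega)
    have : F a j = (j - 1) * k + a := le_antisymm h2 h1
    rw [this]
    simp [minFilling, ha1, ha2, hj1, hj2]
  · have h0 : F a j = 0 := by
      by_contra h
      exact hin (hF.1 a j h)
    rw [h0]
    simp only [minFilling]
    rw [if_neg hin]

end Unique

section Exists

variable {n k : ℕ}

lemma minFilling_isFilling (hn : 1 ≤ n) (hk : 1 ≤ k) : IsFilling n k (minFilling n k) := by
  refine ⟨?_, ⟨?_, ?_, ?_⟩, ?_⟩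
  · intro i j h
    by_contra hc
    simp only [minFilling, if_neg hc] at h
    exact h rfl
  · -- MapsTo
    rintro ⟨a, j⟩ hp
    simp only [Set.mem_prod, Set.mem_Icc] at hp
    obtain ⟨⟨ha1, ha2⟩, hj1, hj2⟩ := hp
    have hsh : (j - 1) * k + k = j * k := rank_shift hj1
    have hmul : j * k ≤ n * k := Nat.mul_le_mul_right _ hj2
    simp only [minFilling, if_pos (by exact ⟨ha1, ha2, hj1, hj2⟩ : 1 ≤ a ∧ a ≤ k ∧ 1 ≤ j ∧ j ≤ n)]
    simp only [Set.mem_Icc]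
    constructor
    · omega
    · rw [mul_comm k n]; omega
  · -- InjOn
    rintro ⟨a, j⟩ hp ⟨c, d⟩ hq h
    simp only [Set.mem_prod, Set.mem_Icc] at hp hq
    obtain ⟨⟨ha1, ha2⟩, hj1, hj2⟩ := hp
    obtain ⟨⟨hc1, hc2⟩, hd1, hd2⟩ := hq
    simp only [minFilling, if_pos (show 1 ≤ a ∧ a ≤ k ∧ 1 ≤ j ∧ j ≤ n from ⟨ha1, ha2, hj1, hj2⟩),
      if_pos (show 1 ≤ c ∧ c ≤ k ∧ 1 ≤ d ∧ d ≤ n from ⟨hc1, hc2, hd1, hd2⟩)] at h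
    obtain ⟨e1, e2⟩ := rank_inj ha1 ha2 hc1 hc2 hj1 hd1 h
    exact Prod.ext e1 e2
  · -- SurjOn
    intro m hm
    simp only [Set.mem_Icc] at hm
    obtain ⟨hm1, hm2⟩ := hm
    have hmod : (m - 1) % k < k := Nat.mod_lt _ hk
    have hdiv : (m - 1) / k < n :=
      Nat.div_lt_of_lt_mul (by omega : m - 1 < k * n)
    have hmod' : (m - 1) % k + 1 ≤ k := Nat.succ_le_of_lt hmod
    have hdiv' : (m - 1) / k + 1 ≤ n := Nat.succ_le_of_lt hdiv
    refine ⟨((m - 1) % k + 1, (m - 1) / k + 1), ?_, ?_⟩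
    · exact ⟨Set.mem_Icc.mpr ⟨Nat.succ_le_succ (Nat.zero_le _), hmod'⟩,
        Set.mem_Icc.mpr ⟨Nat.succ_le_succ (Nat.zero_le _), hdiv'⟩⟩
    · simp only [minFilling]
      rw [if_pos ⟨Nat.succ_le_succ (Nat.zero_le _), hmod', Nat.succ_le_succ (Nat.zero_le _), hdiv'⟩]
      have h1 : ((m - 1) / k + 1 - 1) * k = k * ((m - 1) / k) := by
        simp [mul_comm]
      rw [h1, ← add_assoc, Nat.div_add_mod]
      omega
  · -- column increase
    intro i j hi1 hi2 hj1 hj2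
    simp only [minFilling, if_pos (show 1 ≤ i ∧ i ≤ k ∧ 1 ≤ j ∧ j ≤ n from ⟨hi1, by omega, hj1, hj2⟩),
      if_pos (show 1 ≤ i + 1 ∧ i + 1 ≤ k ∧ 1 ≤ j ∧ j ≤ n from ⟨by omega, by omega, hj1, hj2⟩)]
    omega

lemma minFilling_matches (hn : 1 ≤ n) (hk : 1 ≤ k) {i : ℕ} (hi1 : 1 ≤ i) (hi2 : i ≤ n - 1) :
    MatchAt 2 k (minPattern k) (minFilling n k) i := by
  intro a b c d ha1 ha2 hb1 hb2 hc1 hc2 hd1 hd2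
  have hin : i ≤ n := by omega
  have hi1n : i + 1 ≤ n := by omega
  have hsh : (i - 1) * k + k = i * k := rank_shift hi1
  interval_cases b <;> interval_cases d <;>
    · have e1 : i - 1 + 1 = i := by omega
      have e2 : i - 1 + 2 = i + 1 := by omega
      simp only [e1, e2, minFilling, minPattern,
        if_pos (show 1 ≤ a ∧ a ≤ k ∧ 1 ≤ i ∧ i ≤ n from ⟨ha1, ha2, hi1, hin⟩),
        if_pos (show 1 ≤ c ∧ c ≤ k ∧ 1 ≤ i ∧ i ≤ n from ⟨hc1, hc2, hi1, hin⟩),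
        if_pos (show 1 ≤ a ∧ a ≤ k from ⟨ha1, ha2⟩),
        if_pos (show 1 ≤ c ∧ c ≤ k from ⟨hc1, hc2⟩)]
      first
        | (simp only [if_pos (show 1 ≤ a ∧ a ≤ k ∧ 1 ≤ i + 1 ∧ i + 1 ≤ n from ⟨ha1, ha2, by omega, hi1n⟩)])
        | skip
      first
        | (simp only [if_pos (show 1 ≤ c ∧ c ≤ k ∧ 1 ≤ i + 1 ∧ i + 1 ≤ n from ⟨hc1, hc2, by omega, hi1n⟩)])
        | skip
      norm_num
      try (first
        | (generalize hM : (i - 1) * k = M at hsh ⊢; omega)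
        | omega)

end Exists

end Stmt12Aux

/-- For the pattern with columns `1,…,k` and `k+1,…,2k`, `full_n^P = 1` for all `n ≥ 1`,
and the unique filling with `P`-matches everywhere is `F(i,j) = (j-1)k + i`. -/
theorem stmt12 (n k : ℕ) (hn : 1 ≤ n) (hk : 1 ≤ k) :
    fullCount n k {minPattern k} = 1 ∧
    {F : ℕ → ℕ → ℕ | IsFilling n k F ∧
        ∀ i, 1 ≤ i → i ≤ n - 1 → ∃ P ∈ ({minPattern k} : Set (ℕ → ℕ → ℕ)),
          MatchAt 2 k P F i} = {minFilling n k} := by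
  have hset : {F : ℕ → ℕ → ℕ | IsFilling n k F ∧
      ∀ i, 1 ≤ i → i ≤ n - 1 → ∃ P ∈ ({minPattern k} : Set (ℕ → ℕ → ℕ)),
        MatchAt 2 k P F i} = {minFilling n k} := by
    ext F
    simp only [Set.mem_setOf_eq, Set.mem_singleton_iff]
    constructor
    · rintro ⟨hF, hM⟩
      exact Stmt12Aux.unique hn hk hF hM
    · rintro rfl
      exact ⟨Stmt12Aux.minFilling_isFilling hn hk, fun i hi1 hi2 =>
        ⟨minPattern k, rfl, Stmt12Aux.minFilling_matches hn hk hi1 hi2⟩⟩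
  refine ⟨?_, hset⟩
  have hc : fullCount n k {minPattern k} = Nat.card ({minFilling n k} : Set (ℕ → ℕ → ℕ)) :=
    Nat.card_congr (Equiv.setCongr hset)
  rw [hc]
  simp
end

section
/- Let k = 2 and let P = P_2^{(2,2)} ∈ F_{2,2} be the standard tableau with P(1,1) = 1, P(1,2) = 2, P(2,1) = 3, P(2,2) = 4 (bottom row 1,2 and top row 3,4). Then for all n ≥ 2, full_n^P = C_{n−1}, where C_m = (1/(m+1))·binom(2m,m) is the m-th Catalan number. -/
/-- The standard tableau `P_2^{(2,2)} ∈ F_{2,2}` with bottom row `1, 2` and top row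
`3, 4` (cells outside the `2 × 2` rectangle carry `0`). -/
def P22 : ℕ → ℕ → ℕ := fun i j =>
  if i = 1 then (if j = 1 then 1 else if j = 2 then 2 else 0)
  else if i = 2 then (if j = 1 then 3 else if j = 2 then 4 else 0)
  else 0


/-!
Listing the values `1, …, 2n` of a filling `F ∈ F_{n,2}` in increasing order and writing `U` for
a value in the bottom row and `D` for one in the top row gives a word with `n` letters of each
kind, from which `F` is recovered. A `P_2^{(2,2)}`-match at position `j` means
`b_j < b_{j+1} < t_j < t_{j+1}` for the bottom row `b` and the top row `t`, so all matches together
say that the `(j+1)`-st `U` comes before the `j`-th `D`. For a word with `n` letters of each kind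
this holds exactly when every nonempty proper prefix has more `U`s than `D`s, i.e. when the word is
a nested Dyck word `U x D`. Removing the outer pair leaves an arbitrary Dyck word `x` of
semilength `n - 1`, and there are `C_{n-1}` of these.
-/

open DyckStep Finset

namespace Nat

variable {p : ℕ → Prop} [DecidablePred p] {f : ℕ → ℕ} {N : ℕ}

theorem count_eq_card_filter_of_setOf_eq_image (hp : {v | p v} = f '' Set.Iio N)
    (hf : Set.InjOn f (Set.Iio N)) (M : ℕ) :
    count p M = #{k ∈ range N | f k < M} := by
  have hfilter : {v ∈ range M | p v} = {k ∈ range N | f k < M}.image f := by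
    ext v
    have hv := Set.ext_iff.mp hp v
    simp only [Set.mem_ofPred_eq, Set.mem_image, Set.mem_Iio] at hv
    simp only [mem_filter, mem_range, mem_image, hv]
    grind
  rw [count_eq_card_filter_range, hfilter, Finset.card_image_of_injOn]
  exact hf.mono fun k hk => by simpa using (mem_filter.mp hk).1

theorem nth_eq_of_setOf_eq_image (hp : {v | p v} = f '' Set.Iio N)
    (hf : StrictMonoOn f (Set.Iio N)) {k : ℕ} (hk : k < N) : nth p k = f k := by
  have hpk : p (f k) := show f k ∈ {v | p v} from hp ▸ ⟨k, hk, rfl⟩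
  have hcount : count p (f k) = k := by
    rw [count_eq_card_filter_of_setOf_eq_image hp hf.injOn]
    convert card_range k using 2
    ext k'
    simp only [mem_filter, mem_range]
    exact ⟨fun ⟨hk', hlt⟩ => (hf.lt_iff_lt hk' hk).mp hlt,
      fun hlt => ⟨hlt.trans hk, hf (hlt.trans hk) hk hlt⟩⟩
  calc nth p k = nth p (count p (f k)) := by rw [hcount]
    _ = f k := nth_count hpk

end Nat

namespace DyckFilling

/-- Positions in a word are `0`-based; position `v` will carry the value `v + 1` of a filling. -/
abbrev IsStep (w : List DyckStep) (s : DyckStep) (v : ℕ) : Prop := w[v]? = some s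

/-- Junk (`0`) once `j ≥ w.count s`. -/
noncomputable def stepPos (w : List DyckStep) (s : DyckStep) (j : ℕ) : ℕ :=
  Nat.nth (IsStep w s) j

lemma count_U_add_count_D (l : List DyckStep) : l.count U + l.count D = l.length := by
  induction l with
  | nil => rfl
  | cons a l ih => cases a <;> simp <;> omega

section Word

variable {w : List DyckStep} {s : DyckStep} {j k m : ℕ}

lemma count_isStep (w : List DyckStep) (s : DyckStep) (m : ℕ) :
    Nat.count (IsStep w s) m = (w.take m).count s := by
  induction m with
  | zero => simp
  | succ m ih =>
    rw [Nat.count_succ, ih, List.take_add_one, List.count_append]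
    congr 1
    simp only [IsStep]
    cases w[m]? with
    | none => simp
    | some t => by_cases h : t = s <;> simp [h]

lemma count_isStep_length : Nat.count (IsStep w s) w.length = w.count s := by
  rw [count_isStep, List.take_length]

lemma lt_card_toFinset_of_lt_count (hj : j < w.count s)
    (hf : (Set.ofPred (IsStep w s)).Finite) : j < #hf.toFinset :=
  hj.trans_le (count_isStep_length ▸ Nat.count_le_card hf _)

lemma isStep_stepPos (hj : j < w.count s) : IsStep w s (stepPos w s j) :=
  Nat.nth_mem _ (lt_card_toFinset_of_lt_count hj)

lemma stepPos_lt_length (hj : j < w.count s) : stepPos w s j < w.length :=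
  Nat.nth_lt_of_lt_count (count_isStep_length.symm ▸ hj)

lemma stepPos_lt_stepPos (hjk : j < k) (hk : k < w.count s) : stepPos w s j < stepPos w s k :=
  Nat.nth_lt_nth' hjk (lt_card_toFinset_of_lt_count hk)

lemma stepPos_strictMonoOn : StrictMonoOn (stepPos w s) (Set.Iio (w.count s)) :=
  fun _ _ _ hk hjk => stepPos_lt_stepPos hjk hk

lemma exists_stepPos_eq {v : ℕ} (hv : IsStep w s v) : ∃ j < w.count s, stepPos w s j = v := by
  refine ⟨Nat.count (IsStep w s) v, ?_, Nat.nth_count hv⟩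
  rw [← count_isStep_length]
  exact Nat.count_strict_mono hv (List.getElem?_eq_some_iff.mp hv).1

lemma stepPos_ne_stepPos {t : DyckStep} (hst : s ≠ t) (hj : j < w.count s)
    (hk : k < w.count t) : stepPos w s j ≠ stepPos w t k := fun h =>
  hst (Option.some_injective _ ((isStep_stepPos hj).symm.trans (h ▸ isStep_stepPos hk)))

lemma count_stepPos_add_one (hj : j < w.count s) :
    Nat.count (IsStep w s) (stepPos w s j + 1) = j + 1 :=
  Nat.count_nth_succ (lt_card_toFinset_of_lt_count hj)

lemma add_one_le_count_of_stepPos_lt (hj : j < w.count s) (hm : stepPos w s j < m) :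
    j + 1 ≤ Nat.count (IsStep w s) m :=
  count_stepPos_add_one hj ▸ Nat.count_monotone _ hm

end Word

structure IsInterlaced (n : ℕ) (w : List DyckStep) : Prop where
  up_lt_down : ∀ j < n, stepPos w U j < stepPos w D j
  up_succ_lt_down : ∀ j, j + 1 < n → stepPos w U (j + 1) < stepPos w D j

theorem isInterlaced_of_isNested {n : ℕ} {q : DyckWord} (hq : q.IsNested)
    (hn : q.semilength = n) : IsInterlaced n q.toList := by
  subst hn
  have hU : q.toList.count U = q.semilength := rfl
  have hD : q.toList.count D = q.semilength := q.count_U_eq_count_D ▸ hU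
  -- if `U` number `k` came after `D` number `j` (counting from `0`), the prefix ending with that
  -- `D` would hold `j + 1` letters `D` but at most `k` letters `U`
  have key : ∀ j k, j < q.semilength → k < q.semilength → ¬ stepPos q U k < stepPos q D j →
      Nat.count (IsStep q U) (stepPos q D j + 1) ≤ k ∧
        Nat.count (IsStep q D) (stepPos q D j + 1) = j + 1 := fun j k hj hk hlt =>
    ⟨Nat.le_nth_of_count_le ((not_lt.mp hlt).lt_of_ne
      (stepPos_ne_stepPos (by decide) (hU ▸ hk) (hD ▸ hj)).symm),
     count_stepPos_add_one (hD ▸ hj)⟩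
  constructor
  · intro j hj
    by_contra hlt
    obtain ⟨hcU, hcD⟩ := key j j hj hj hlt
    have := q.count_D_le_count_U (stepPos q D j + 1)
    rw [← count_isStep, ← count_isStep] at this
    omega
  · intro j hj
    by_contra hlt
    obtain ⟨hcU, hcD⟩ := key j (j + 1) (by omega) hj hlt
    have hlast : stepPos q D j < stepPos q D (q.semilength - 1) :=
      stepPos_lt_stepPos (by omega) (by omega)
    have hlen := stepPos_lt_length (w := q.toList) (s := D) (j := q.semilength - 1) (by omega)
    have := hq.2 (by omega : 0 < stepPos q D j + 1) (by omega : stepPos q D j + 1 < q.toList.length)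
    rw [← count_isStep, ← count_isStep] at this
    omega

section Interlaced

variable {n : ℕ} {w : List DyckStep} (hU : w.count U = n) (hD : w.count D = n)
  (h : IsInterlaced n w)
include hU hD h

theorem count_take_D_lt_count_take_U_of_isInterlaced {m : ℕ} (hm0 : 0 < m) (hm : m < w.length) :
    (w.take m).count D < (w.take m).count U := by
  have hlen : w.length = 2 * n := by rw [← count_U_add_count_D, hU, hD]; ring
  have hsum : Nat.count (IsStep w U) m + Nat.count (IsStep w D) m = m := by
    rw [count_isStep, count_isStep, count_U_add_count_D, List.length_take, min_eq_left hm.le]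
  have hDle : Nat.count (IsStep w D) m ≤ n :=
    hD ▸ count_isStep_length (w := w) ▸ Nat.count_monotone _ hm.le
  rw [← count_isStep, ← count_isStep]
  set t := Nat.count (IsStep w D) m
  rcases Nat.eq_zero_or_pos t with ht | ht
  · omega
  have hlast : stepPos w D (t - 1) < m := Nat.nth_lt_of_lt_count (by omega)
  rcases lt_or_eq_of_le hDle with htn | htn
  · -- `D` number `t - 1` lies before `m`, and `U` number `t` lies before that `D`
    have hcross : stepPos w U t < stepPos w D (t - 1) := by
      simpa [Nat.sub_add_cancel ht] using h.up_succ_lt_down (t - 1) (by omega)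
    have := add_one_le_count_of_stepPos_lt (hU ▸ htn) (hcross.trans hlast)
    omega
  · -- all `D`s, hence all `U`s, lie before `m`, so `m ≥ 2 n`
    have := add_one_le_count_of_stepPos_lt (hU ▸ (by omega : n - 1 < n))
      ((h.up_lt_down (n - 1) (by omega)).trans (htn ▸ hlast))
    omega

def dyckWordOfIsInterlaced : DyckWord where
  toList := w
  count_U_eq_count_D := hU.trans hD.symm
  count_D_le_count_U i := by
    rcases Nat.eq_zero_or_pos i with rfl | hi
    · simp
    rcases lt_or_ge i w.length with hiw | hiw
    · exact (count_take_D_lt_count_take_U_of_isInterlaced hU hD h hi hiw).le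
    · rw [List.take_of_length_le hiw, hU, hD]

theorem isNested_dyckWordOfIsInterlaced (hn : 0 < n) :
    (dyckWordOfIsInterlaced hU hD h).IsNested := by
  refine ⟨fun h0 => ?_, fun i hi hiw => count_take_D_lt_count_take_U_of_isInterlaced hU hD h hi hiw⟩
  have : w = [] := congrArg DyckWord.toList h0
  rw [this, List.count_nil] at hU
  omega

end Interlaced

def IsFull (n : ℕ) (F : ℕ → ℕ → ℕ) : Prop :=
  IsFilling n 2 F ∧ ∀ i, 1 ≤ i → i ≤ n - 1 → ∃ P ∈ ({P22} : Set (ℕ → ℕ → ℕ)), MatchAt 2 2 P F i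

lemma matchAt_P22_iff {F : ℕ → ℕ → ℕ} {i : ℕ} (hi : 1 ≤ i) :
    MatchAt 2 2 P22 F i ↔ F 1 i < F 1 (i + 1) ∧ F 1 (i + 1) < F 2 i ∧ F 2 i < F 2 (i + 1) := by
  have e1 : i - 1 + 1 = i := by omega
  have e2 : i - 1 + 2 = i + 1 := by omega
  constructor
  · intro h
    refine ⟨?_, ?_, ?_⟩
    · simpa [e1, e2, P22] using h 1 1 1 2
    · simpa [e1, e2, P22] using h 1 2 2 1
    · simpa [e1, e2, P22] using h 2 1 2 2
  · rintro ⟨h1, h2, h3⟩ a b c d ha1 ha2 hb1 hb2 hc1 hc2 hd1 hd2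
    interval_cases a <;> interval_cases b <;> interval_cases c <;> interval_cases d <;>
      simp only [e1, e2] <;> norm_num [P22] <;> omega

lemma isFull_iff {n : ℕ} {F : ℕ → ℕ → ℕ} :
    IsFull n F ↔ IsFilling n 2 F ∧ ∀ i, 1 ≤ i → i + 1 ≤ n →
      F 1 i < F 1 (i + 1) ∧ F 1 (i + 1) < F 2 i ∧ F 2 i < F 2 (i + 1) := by
  refine and_congr_right fun _ => forall_congr' fun i => forall_congr' fun hi => ?_
  simp only [Set.mem_singleton_iff, exists_eq_left, matchAt_P22_iff hi]
  exact ⟨fun h hin => h (by omega), fun h hin => h (by omega)⟩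

def rowStep (i : ℕ) : DyckStep := if i = 1 then U else D

@[simp] lemma rowStep_one : rowStep 1 = U := rfl

@[simp] lemma rowStep_two : rowStep 2 = D := rfl

noncomputable def tableau (n : ℕ) (w : List DyckStep) : ℕ → ℕ → ℕ := fun i j =>
  if 1 ≤ i ∧ i ≤ 2 ∧ 1 ≤ j ∧ j ≤ n then stepPos w (rowStep i) (j - 1) + 1 else 0

section Tableau

variable {n : ℕ} {w : List DyckStep} {j : ℕ}

lemma tableau_of_mem {i : ℕ} (hi1 : 1 ≤ i) (hi2 : i ≤ 2) (hj : 1 ≤ j) (hjn : j ≤ n) :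
    tableau n w i j = stepPos w (rowStep i) (j - 1) + 1 :=
  if_pos ⟨hi1, hi2, hj, hjn⟩

lemma tableau_one (hj : 1 ≤ j) (hjn : j ≤ n) : tableau n w 1 j = stepPos w U (j - 1) + 1 :=
  tableau_of_mem le_rfl one_le_two hj hjn

lemma tableau_two (hj : 1 ≤ j) (hjn : j ≤ n) : tableau n w 2 j = stepPos w D (j - 1) + 1 :=
  tableau_of_mem one_le_two le_rfl hj hjn

variable (hU : w.count U = n) (hD : w.count D = n)
include hU hD

theorem bijOn_tableau :
    Set.BijOn (fun p : ℕ × ℕ => tableau n w p.1 p.2) (Set.Icc 1 2 ×ˢ Set.Icc 1 n)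
      (Set.Icc 1 (2 * n)) := by
  have hcount : ∀ s, w.count s = n := by rintro (_ | _) <;> assumption
  have hlen : w.length = 2 * n := by rw [← count_U_add_count_D, hU, hD]; ring
  refine ⟨?_, ?_, ?_⟩
  · rintro ⟨i, j⟩ ⟨⟨hi1, hi2⟩, hj1, hj2⟩
    have := stepPos_lt_length (w := w) (s := rowStep i) (j := j - 1) (by rw [hcount]; omega)
    simp only [tableau_of_mem hi1 hi2 hj1 hj2, Set.mem_Icc]
    omega
  · rintro ⟨i, j⟩ ⟨⟨hi1, hi2⟩, hj1, hj2⟩ ⟨i', j'⟩ ⟨⟨hi1', hi2'⟩, hj1', hj2'⟩ heq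
    simp only [tableau_of_mem hi1 hi2 hj1 hj2, tableau_of_mem hi1' hi2' hj1' hj2',
      add_left_inj] at heq
    have hs : rowStep i = rowStep i' := by
      by_contra hs
      exact stepPos_ne_stepPos hs (by rw [hcount]; omega) (by rw [hcount]; omega) heq
    obtain rfl : i = i' := by
      unfold rowStep at hs
      split_ifs at hs <;> omega
    have := stepPos_strictMonoOn.injOn (by rw [Set.mem_Iio, hcount]; omega)
      (by rw [Set.mem_Iio, hcount]; omega) heq
    simp only [Prod.mk.injEq, true_and]
    omega
  · intro v ⟨hv1, hv2⟩
    obtain ⟨s, hs⟩ : ∃ s, IsStep w s (v - 1) :=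
      ⟨_, List.getElem?_eq_getElem (by omega : v - 1 < w.length)⟩
    obtain ⟨j, hj, hjv⟩ := exists_stepPos_eq hs
    rw [hcount] at hj
    obtain ⟨i, hi1, hi2, hsi⟩ : ∃ i, 1 ≤ i ∧ i ≤ 2 ∧ rowStep i = s := by
      cases s
      exacts [⟨1, le_rfl, one_le_two, rfl⟩, ⟨2, one_le_two, le_rfl, rfl⟩]
    refine ⟨(i, j + 1), ⟨⟨hi1, hi2⟩, by omega, by omega⟩, ?_⟩
    change tableau n w i (j + 1) = v
    rw [tableau_of_mem hi1 hi2 (by omega) (by omega), hsi, Nat.add_sub_cancel, hjv]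
    omega

theorem isFilling_tableau (hcol : ∀ j < n, stepPos w U j < stepPos w D j) :
    IsFilling n 2 (tableau n w) := by
  refine ⟨fun i j hne => ?_, bijOn_tableau hU hD, fun i j hi1 hi2 hj1 hj2 => ?_⟩
  · unfold tableau at hne
    split_ifs at hne <;> omega
  · obtain rfl : i = 1 := by omega
    rw [tableau_one hj1 hj2, tableau_two hj1 hj2]
    have := hcol (j - 1) (by omega)
    omega

theorem isFull_tableau (h : IsInterlaced n w) : IsFull n (tableau n w) := by
  refine isFull_iff.mpr ⟨isFilling_tableau hU hD h.up_lt_down, fun i hi hin => ?_⟩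
  rw [tableau_one hi (by omega), tableau_one (by omega) hin, tableau_two hi (by omega),
    tableau_two (by omega) hin, Nat.add_sub_cancel]
  have hUi := stepPos_lt_stepPos (w := w) (s := U) (Nat.sub_lt hi one_pos) (hU ▸ hin)
  have hDi := stepPos_lt_stepPos (w := w) (s := D) (Nat.sub_lt hi one_pos) (hD ▸ hin)
  have hcross := h.up_succ_lt_down (i - 1) (by omega)
  rw [Nat.sub_add_cancel hi] at hcross
  omega

end Tableau

def wordOf (n : ℕ) (F : ℕ → ℕ → ℕ) : List DyckStep :=
  (List.range (2 * n)).map fun v => if v + 1 ∈ (Icc 1 n).image (F 1) then U else D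

lemma isStep_wordOf_iff {n : ℕ} {F : ℕ → ℕ → ℕ} {s : DyckStep} {v : ℕ} :
    IsStep (wordOf n F) s v ↔ v < 2 * n ∧ (v + 1 ∈ (Icc 1 n).image (F 1) ↔ s = U) := by
  simp only [IsStep, wordOf, List.getElem?_map]
  by_cases hv : v < 2 * n
  · rw [List.getElem?_range hv]
    by_cases hrow : v + 1 ∈ (Icc 1 n).image (F 1) <;> cases s <;> simp [hv, hrow]
  · rw [List.getElem?_eq_none (by simpa using hv)]
    simp [hv]

theorem wordOf_tableau {n : ℕ} {w : List DyckStep} (hU : w.count U = n) (hD : w.count D = n) :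
    wordOf n (tableau n w) = w := by
  have hlen : w.length = 2 * n := by rw [← count_U_add_count_D, hU, hD]; ring
  have hbottom : ∀ v, v + 1 ∈ (Icc 1 n).image (tableau n w 1) ↔ IsStep w U v := by
    intro v
    simp only [mem_image, mem_Icc]
    constructor
    · rintro ⟨j, ⟨hj1, hjn⟩, hjv⟩
      rw [tableau_one hj1 hjn, add_left_inj] at hjv
      exact hjv ▸ isStep_stepPos (by omega)
    · intro hv
      obtain ⟨j, hj, rfl⟩ := exists_stepPos_eq hv
      exact ⟨j + 1, ⟨by omega, by omega⟩,
        by rw [tableau_one (by omega) (by omega), Nat.add_sub_cancel]⟩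
  apply List.ext_getElem (by simp [wordOf, hlen])
  intro v hv hvw
  simp only [wordOf, List.getElem_map, List.getElem_range, hbottom]
  split_ifs with hUv
  · exact ((List.getElem?_eq_some_iff.mp hUv).2).symm
  · exact ((w[v]).dichotomy.resolve_left fun h => hUv (List.getElem?_eq_some_iff.mpr ⟨hvw, h⟩)).symm

section WordOf

variable {n : ℕ} {F : ℕ → ℕ → ℕ} (hF : IsFull n F)
include hF

lemma mem_Icc_of_isFull {i j : ℕ} (hi1 : 1 ≤ i) (hi2 : i ≤ 2) (hj1 : 1 ≤ j) (hjn : j ≤ n) :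
    1 ≤ F i j ∧ F i j ≤ 2 * n :=
  hF.1.2.1.1 (show (i, j) ∈ Set.Icc 1 2 ×ˢ Set.Icc 1 n from ⟨⟨hi1, hi2⟩, hj1, hjn⟩)

lemma strictMonoOn_row_of_isFull {i : ℕ} (hi1 : 1 ≤ i) (hi2 : i ≤ 2) :
    StrictMonoOn (fun k => F i (k + 1) - 1) (Set.Iio n) := by
  refine strictMonoOn_of_lt_add_one Set.ordConnected_Iio fun k _ _ hk => ?_
  have hk : k + 1 < n := hk
  have hadj := (isFull_iff.mp hF).2 (k + 1) (by omega) hk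
  have := (mem_Icc_of_isFull hF hi1 hi2 (j := k + 1) (by omega) (by omega)).1
  show F i (k + 1) - 1 < F i (k + 1 + 1) - 1
  interval_cases i <;> omega

lemma setOf_isStep_wordOf_U :
    {v | IsStep (wordOf n F) U v} = (fun k => F 1 (k + 1) - 1) '' Set.Iio n := by
  ext v
  simp only [Set.mem_ofPred_eq, isStep_wordOf_iff, iff_true, mem_image, mem_Icc, Set.mem_image,
    Set.mem_Iio]
  constructor
  · rintro ⟨-, j, ⟨hj1, hjn⟩, hjv⟩
    exact ⟨j - 1, by omega, by rw [Nat.sub_add_cancel hj1, hjv, Nat.add_sub_cancel]⟩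
  · rintro ⟨k, hk, rfl⟩
    have := mem_Icc_of_isFull hF le_rfl one_le_two (j := k + 1) (by omega) hk
    exact ⟨by omega, k + 1, ⟨by omega, hk⟩, by omega⟩

lemma setOf_isStep_wordOf_D :
    {v | IsStep (wordOf n F) D v} = (fun k => F 2 (k + 1) - 1) '' Set.Iio n := by
  obtain ⟨-, ⟨-, hinj, hsurj⟩, -⟩ := hF.1
  ext v
  simp only [Set.mem_ofPred_eq, isStep_wordOf_iff, reduceCtorEq, iff_false, mem_image, mem_Icc,
    Set.mem_image, Set.mem_Iio, not_exists, not_and]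
  constructor
  · rintro ⟨hv, hrow⟩
    obtain ⟨⟨i, j⟩, ⟨⟨hi1, hi2⟩, hj1, hjn⟩, hij⟩ := hsurj (show v + 1 ∈ Set.Icc 1 (2 * n) by
      simp only [Set.mem_Icc]; omega)
    change F i j = v + 1 at hij
    obtain rfl : i = 2 := by
      by_contra hi
      exact hrow j ⟨hj1, hjn⟩ (by rw [← hij, show i = 1 by omega])
    exact ⟨j - 1, by omega, by rw [Nat.sub_add_cancel hj1, hij, Nat.add_sub_cancel]⟩
  · rintro ⟨k, hk, rfl⟩
    have := mem_Icc_of_isFull hF one_le_two le_rfl (j := k + 1) (by omega) hk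
    refine ⟨by omega, fun j hj hjk => ?_⟩
    have := hinj (show ((1 : ℕ), j) ∈ Set.Icc 1 2 ×ˢ Set.Icc 1 n from ⟨⟨le_rfl, one_le_two⟩, hj⟩)
      (show ((2 : ℕ), k + 1) ∈ Set.Icc 1 2 ×ˢ Set.Icc 1 n from ⟨⟨one_le_two, le_rfl⟩, by omega, hk⟩)
      (show F 1 j = F 2 (k + 1) by omega)
    simp at this

lemma setOf_isStep_wordOf {i : ℕ} (hi1 : 1 ≤ i) (hi2 : i ≤ 2) :
    {v | IsStep (wordOf n F) (rowStep i) v} = (fun k => F i (k + 1) - 1) '' Set.Iio n := by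
  interval_cases i
  exacts [setOf_isStep_wordOf_U hF, setOf_isStep_wordOf_D hF]

lemma stepPos_wordOf {i k : ℕ} (hi1 : 1 ≤ i) (hi2 : i ≤ 2) (hk : k < n) :
    stepPos (wordOf n F) (rowStep i) k = F i (k + 1) - 1 :=
  Nat.nth_eq_of_setOf_eq_image (setOf_isStep_wordOf hF hi1 hi2)
    (strictMonoOn_row_of_isFull hF hi1 hi2) hk

lemma count_wordOf {i : ℕ} (hi1 : 1 ≤ i) (hi2 : i ≤ 2) : (wordOf n F).count (rowStep i) = n := by
  rw [← count_isStep_length, Nat.count_eq_card_filter_of_setOf_eq_image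
    (setOf_isStep_wordOf hF hi1 hi2) (strictMonoOn_row_of_isFull hF hi1 hi2).injOn]
  convert card_range n using 2
  refine filter_true_of_mem fun k hk => ?_
  have := mem_Icc_of_isFull hF hi1 hi2 (j := k + 1) (by omega) (mem_range.mp hk)
  rw [wordOf, List.length_map, List.length_range]
  omega

theorem tableau_wordOf : tableau n (wordOf n F) = F := by
  funext i j
  by_cases hbox : 1 ≤ i ∧ i ≤ 2 ∧ 1 ≤ j ∧ j ≤ n
  · obtain ⟨hi1, hi2, hj1, hjn⟩ := hbox
    have := mem_Icc_of_isFull hF hi1 hi2 hj1 hjn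
    rw [tableau_of_mem hi1 hi2 hj1 hjn, stepPos_wordOf hF hi1 hi2 (by omega),
      Nat.sub_add_cancel hj1]
    omega
  · rw [show tableau n (wordOf n F) i j = 0 from if_neg hbox]
    by_contra hne
    exact hbox (hF.1.1 i j (Ne.symm hne))

theorem isInterlaced_wordOf : IsInterlaced n (wordOf n F) := by
  have hU : ∀ k < n, stepPos (wordOf n F) U k = F 1 (k + 1) - 1 :=
    fun _ hk => stepPos_wordOf hF le_rfl one_le_two hk
  have hD : ∀ k < n, stepPos (wordOf n F) D k = F 2 (k + 1) - 1 :=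
    fun _ hk => stepPos_wordOf hF one_le_two le_rfl hk
  constructor
  · intro j hj
    have : F 1 (j + 1) < F 2 (j + 1) := hF.1.2.2 1 (j + 1) le_rfl one_lt_two (by omega) hj
    have := mem_Icc_of_isFull hF le_rfl one_le_two (j := j + 1) (by omega) hj
    rw [hU _ hj, hD _ hj]
    omega
  · intro j hj
    have := ((isFull_iff.mp hF).2 (j + 1) (by omega) hj).2.1
    have := mem_Icc_of_isFull hF le_rfl one_le_two (j := j + 1 + 1) (by omega) hj
    rw [hU _ hj, hD _ (by omega)]
    omega

end WordOf

noncomputable def isFullEquivIsNested (n : ℕ) (hn : 0 < n) :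
    {F // IsFull n F} ≃ {q : DyckWord // q.IsNested ∧ q.semilength = n} where
  toFun F :=
    have hU : (wordOf n F).count U = n := count_wordOf F.2 (i := 1) le_rfl one_le_two
    have hD : (wordOf n F).count D = n := count_wordOf F.2 (i := 2) one_le_two le_rfl
    ⟨dyckWordOfIsInterlaced hU hD (isInterlaced_wordOf F.2),
      isNested_dyckWordOfIsInterlaced hU hD _ hn, hU⟩
  invFun q :=
    have hD : q.1.toList.count D = n := q.1.count_U_eq_count_D ▸ q.2.2
    ⟨tableau n q.1, isFull_tableau q.2.2 hD (isInterlaced_of_isNested q.2.1 q.2.2)⟩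
  left_inv F := Subtype.ext (tableau_wordOf F.2)
  right_inv q := Subtype.ext (DyckWord.ext (wordOf_tableau q.2.2 (q.1.count_U_eq_count_D ▸ q.2.2)))

def denestEquiv (m : ℕ) :
    {q : DyckWord // q.IsNested ∧ q.semilength = m + 1} ≃ {p : DyckWord // p.semilength = m} where
  toFun q := ⟨q.1.denest q.2.1, by
    have h := q.2.2
    rw [← q.1.nest_denest q.2.1, DyckWord.semilength_nest] at h
    omega⟩
  invFun p := ⟨p.1.nest, .nest, by rw [DyckWord.semilength_nest, p.2]⟩
  left_inv q := Subtype.ext (q.1.nest_denest q.2.1)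
  right_inv p := Subtype.ext p.1.denest_nest

end DyckFilling

/-- For all `n ≥ 2`, `full_n^{P_2^{(2,2)}} = C_{n-1}`, the `(n-1)`-st Catalan number. -/
theorem stmt13 (n : ℕ) (hn : 2 ≤ n) :
    fullCount n 2 {P22} = catalan (n - 1) := by
  obtain ⟨m, rfl⟩ : ∃ m, n = m + 1 := ⟨n - 1, by omega⟩
  calc fullCount (m + 1) 2 {P22} = Nat.card {p : DyckWord // p.semilength = m} :=
        Nat.card_congr ((DyckFilling.isFullEquivIsNested (m + 1) m.succ_pos).trans
          (DyckFilling.denestEquiv m))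
    _ = catalan (m + 1 - 1) := by
        rw [Nat.card_eq_fintype_card, DyckWord.card_dyckWord_semilength_eq_catalan,
          Nat.add_sub_cancel]
end

section
/- Let V be a finite set and let E ⊆ V × V be the edge relation of a directed acyclic graph without multiple edges (i.e. the transitive closure of E is irreflexive). Let H ⊆ E consist of those edges (i,j) ∈ E such that there is no directed path from i to j using only edges of E other than (i,j) itself (equivalently, (i,j) is not in the transitive closure of E \ {(i,j)}). Then for all x, y ∈ V, there is a directed path from x to y using edges of E if and only if there is a directed path from x to y using edges of H; that is, the transitive closures of E and H coincide. -/
/-!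
An edge `(a, b)` outside `H` is bypassed by a path from `a` to `b` avoiding it. Every edge
`(c, d)` on that path has `a ≤ c` and `d ≤ b` in the reachability order, so its interval
`{z | c ≤ z ≤ d}` is contained in that of `(a, b)`, and strictly so by acyclicity: it misses
`a` or `b`. Induction on the size of the interval therefore puts every edge of `E` into the
transitive closure of `H`.
-/

open Relation

namespace Relation

variable {α : Type*}

theorem TransGen.of_steps {r p : α → α → Prop} {a b : α} (h : TransGen r a b)
    (hstep : ∀ c d, r c d → ReflTransGen r a c → ReflTransGen r d b → TransGen p c d) :
    TransGen p a b := by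
  induction h using TransGen.head_induction_on with
  | single hab => exact hstep _ _ hab .refl .refl
  | head hac _ ih =>
    refine (hstep _ _ hac .refl ?_).trans (ih fun c d hcd hc hd => hstep c d hcd ?_ hd)
    · exact TransGen.to_reflTransGen ‹_›
    · exact ReflTransGen.head hac hc

def deleteEdge (r : α → α → Prop) (a b : α) : α → α → Prop :=
  fun c d => r c d ∧ ¬(c = a ∧ d = b)

def irredundantEdges (r : α → α → Prop) : α → α → Prop :=
  fun a b => r a b ∧ ¬TransGen (deleteEdge r a b) a b

def pathInterval (r : α → α → Prop) (a b : α) : Set α :=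
  {z | ReflTransGen r a z ∧ ReflTransGen r z b}

theorem eq_of_reflTransGen_of_reflTransGen {r : α → α → Prop}
    (hacyc : ∀ v, ¬TransGen r v v) {a b : α} (hab : ReflTransGen r a b)
    (hba : ReflTransGen r b a) : a = b := by
  rcases reflTransGen_iff_eq_or_transGen.mp hab with h | h
  · exact h.symm
  · exact absurd (h.trans_left hba) (hacyc a)

theorem pathInterval_ssubset {r : α → α → Prop} (hacyc : ∀ v, ¬TransGen r v v)
    {a b c d : α} (hab : ReflTransGen r a b) (hac : ReflTransGen r a c)
    (hdb : ReflTransGen r d b) (hne : ¬(c = a ∧ d = b)) :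
    pathInterval r c d ⊂ pathInterval r a b := by
  refine Set.ssubset_iff_subset_ne.mpr
    ⟨fun z hz => ⟨hac.trans hz.1, hz.2.trans hdb⟩, fun heq => hne ⟨?_, ?_⟩⟩
  · have ha : a ∈ pathInterval r c d := heq ▸ ⟨.refl, hab⟩
    exact eq_of_reflTransGen_of_reflTransGen hacyc ha.1 hac
  · have hb : b ∈ pathInterval r c d := heq ▸ ⟨hab, .refl⟩
    exact eq_of_reflTransGen_of_reflTransGen hacyc hdb hb.2

theorem transGen_irredundantEdges_of_rel [Finite α] {r : α → α → Prop}
    (hacyc : ∀ v, ¬TransGen r v v) {a b : α} (hab : r a b) :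
    TransGen (irredundantEdges r) a b := by
  induction hn : (pathInterval r a b).ncard using Nat.strong_induction_on generalizing a b with
  | _ n ih =>
    by_cases hbypass : TransGen (deleteEdge r a b) a b
    · have hsub : deleteEdge r a b ≤ r := fun _ _ h => h.1
      refine hbypass.of_steps fun c d hcd hc hd => ih _ ?_ hcd.1 rfl
      rw [← hn]
      exact Set.ncard_lt_ncard (pathInterval_ssubset hacyc (.single hab)
        (ReflTransGen.mono hsub _ _ hc) (ReflTransGen.mono hsub _ _ hd) hcd.2)
    · exact .single ⟨hab, hbypass⟩

end Relation

/-- Let `E` be the edge relation of a directed acyclic graph on a finite vertex set `V`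
(acyclic: the transitive closure of `E` is irreflexive).  Let `H` consist of those edges
`(i,j) ∈ E` for which there is no directed path from `i` to `j` avoiding the edge
`(i,j)`.  Then the transitive closures of `E` and `H` coincide: there is a directed path
from `x` to `y` in `E` iff there is one in `H`. -/
theorem stmt15 {V : Type*} [Finite V] (E : V → V → Prop)
    (hacyc : ∀ v : V, ¬ Relation.TransGen E v v) (x y : V) :
    Relation.TransGen E x y ↔
      Relation.TransGen
        (fun a b => E a b ∧
          ¬ Relation.TransGen (fun c d => E c d ∧ ¬(c = a ∧ d = b)) a b) x y :=
  ⟨TransGen.closed (fun _ _ => transGen_irredundantEdges_of_rel hacyc) x y,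
    TransGen.mono (fun _ _ h => h.1) x y⟩
end
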